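/- arXiv:2110.10231 — 9 statements merged into one kernel-verified Lean document; each statement's English description precedes it below -/
import Mathlib

section
/- Let u, v be positive integers. Consider the set S = {1, ..., 2u+2v} and the three involutive pairings f: [1,u] → [u+1,2u] given by f(x) = 2u+1-x, g: [2u+1,2u+v] → [2u+v+1,2u+2v] given by g(x) = 4u+2v+1-x, and h: [1,u+v] → [u+v+1,2u+2v] given by h(x) = 2u+2v+1-x. Then the number of orbits of S under the equivalence relation generated by x ~ f(x), x ~ g(x), x ~ h(x) equals gcd(u,v). -/
open Relation

namespace Stmt0Aux

/-- The orbit invariant: `x ↦ min r (2g+1-r)` where `r ∈ [1,2g]` is the shifted residue. -/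
def F (g x : ℕ) : ℕ :=
  min ((x - 1) % (2 * g) + 1) (2 * g + 1 - ((x - 1) % (2 * g) + 1))

lemma F_mem (g x : ℕ) (hg : 0 < g) (hx : 1 ≤ x) : 1 ≤ F g x ∧ F g x ≤ g := by
  have h := Nat.mod_lt (x - 1) (show 0 < 2 * g by omega)
  unfold F; omega

lemma F_eq_self (g k : ℕ) (hg : 0 < g) (h1 : 1 ≤ k) (h2 : k ≤ g) : F g k = k := by
  have : (k - 1) % (2 * g) = k - 1 := Nat.mod_eq_of_lt (by omega)
  unfold F; omega

/-- shifted residue is congruent to x -/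
lemma rep_modEq (g x : ℕ) (hx : 1 ≤ x) : (x - 1) % (2 * g) + 1 ≡ x [MOD 2 * g] := by
  have := (Nat.mod_modEq (x - 1) (2 * g)).add_right 1
  rwa [show x - 1 + 1 = x by omega] at this

lemma F_congr_mod (g x y : ℕ) (hg : 0 < g) (hx : 1 ≤ x) (hy : 1 ≤ y)
    (h : x ≡ y [MOD 2 * g]) : F g x = F g y := by
  have hx' := rep_modEq g x hx
  have hy' := rep_modEq g y hy
  have h2 : (x - 1) % (2*g) + 1 ≡ (y - 1) % (2*g) + 1 [MOD 2*g] :=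
    (hx'.trans h).trans hy'.symm
  have h3 : (x - 1) % (2*g) ≡ (y - 1) % (2*g) [MOD 2*g] := Nat.ModEq.add_right_cancel' 1 h2
  have hxl := Nat.mod_lt (x - 1) (show 0 < 2 * g by omega)
  have hyl := Nat.mod_lt (y - 1) (show 0 < 2 * g by omega)
  have : (x - 1) % (2*g) = (y - 1) % (2*g) := by
    have h4 : (x-1) % (2*g) % (2*g) = (y-1) % (2*g) % (2*g) := h3
    rwa [Nat.mod_eq_of_lt hxl, Nat.mod_eq_of_lt hyl] at h4
  unfold F; rw [this]

lemma F_flip (g x y : ℕ) (hg : 0 < g) (hx : 1 ≤ x) (hy : 1 ≤ y)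
    (h : x + y ≡ 1 [MOD 2 * g]) : F g x = F g y := by
  set rx := (x - 1) % (2 * g) + 1 with hrx
  set ry := (y - 1) % (2 * g) + 1 with hry
  have hxl := Nat.mod_lt (x - 1) (show 0 < 2 * g by omega)
  have hyl := Nat.mod_lt (y - 1) (show 0 < 2 * g by omega)
  have h1 : rx + ry ≡ 1 [MOD 2 * g] :=
    (((rep_modEq g x hx).add (rep_modEq g y hy)).trans h)
  have hdvd : 2 * g ∣ rx + ry - 1 := (Nat.modEq_iff_dvd' (by omega)).mp h1.symm
  obtain ⟨k, hk⟩ := hdvd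
  have hk1 : k ≠ 0 := by rintro rfl; omega
  have hk2 : k < 2 := by
    have : 2 * g * k < 2 * g * 2 := by omega
    exact Nat.lt_of_mul_lt_mul_left this
  have hk3 : k = 1 := by omega
  subst hk3
  have hsum : rx + ry = 2 * g + 1 := by omega
  unfold F
  rw [← hrx, ← hry]
  omega

/-- solvability of linear congruences -/
lemma exists_t (a b m : ℕ) (hb : 0 < b) (h : Nat.gcd a b ∣ m) : ∃ t, a * t ≡ m [MOD b] := by
  set d := Nat.gcd a b with hd
  obtain ⟨q, hq⟩ := h
  have hbez := Nat.gcd_eq_gcd_ab a b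
  set A := Nat.gcdA a b
  set B := Nat.gcdB a b
  have hm : (m : ℤ) = a * (A * q) + b * (B * q) := by
    have : (m : ℤ) = (d : ℤ) * q := by exact_mod_cast congrArg (Nat.cast (R := ℤ)) hq
    rw [this, hbez]; ring
  set t0 : ℤ := A * q with ht0
  have hbz : (b : ℤ) ≠ 0 := by exact_mod_cast hb.ne'
  refine ⟨(t0 % b).toNat, ?_⟩
  rw [Nat.modEq_iff_dvd]
  push_cast
  rw [Int.toNat_of_nonneg (Int.emod_nonneg t0 hbz)]
  have htt : (t0 % (b:ℤ)) = t0 - b * (t0 / b) := Int.emod_def t0 b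
  refine ⟨a * (t0 / b) + B * q, ?_⟩
  rw [htt]
  linear_combination hm



variable (u v : ℕ)

def Rel : Set.Icc 1 (2 * u + 2 * v) → Set.Icc 1 (2 * u + 2 * v) → Prop := fun x y =>
  (1 ≤ x.1 ∧ x.1 ≤ u ∧ y.1 = 2 * u + 1 - x.1) ∨
  (2 * u + 1 ≤ x.1 ∧ x.1 ≤ 2 * u + v ∧ y.1 = 4 * u + 2 * v + 1 - x.1) ∨
  (1 ≤ x.1 ∧ x.1 ≤ u + v ∧ y.1 = 2 * u + 2 * v + 1 - x.1)

def el (m : ℕ) (h1 : 1 ≤ m) (h2 : m ≤ 2 * u + 2 * v) : Set.Icc 1 (2 * u + 2 * v) :=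
  ⟨m, Set.mem_Icc.mpr ⟨h1, h2⟩⟩

lemma el_val (m : ℕ) (h1 h2) : (el u v m h1 h2).1 = m := rfl

lemma mem_bounds (x : Set.Icc 1 (2 * u + 2 * v)) : 1 ≤ x.1 ∧ x.1 ≤ 2 * u + 2 * v :=
  Set.mem_Icc.mp x.2

/-- the `h`-pairing step -/
lemma hpsi (x : Set.Icc 1 (2 * u + 2 * v)) (h1 : 1 ≤ 2 * u + 2 * v + 1 - x.1)
    (h2 : 2 * u + 2 * v + 1 - x.1 ≤ 2 * u + 2 * v) :
    EqvGen (Rel u v) x (el u v (2 * u + 2 * v + 1 - x.1) h1 h2) := by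
  obtain ⟨hb1, hb2⟩ := mem_bounds u v x
  by_cases hc : x.1 ≤ u + v
  · exact EqvGen.rel _ _ (Or.inr (Or.inr ⟨hb1, hc, rfl⟩))
  · refine EqvGen.symm _ _ (EqvGen.rel _ _ (Or.inr (Or.inr ⟨?_, ?_, ?_⟩)))
    · exact h1
    · simp only [el_val]; omega
    · simp only [el_val]; omega

/-- the `f∪g`-pairing step, `x ≤ 2u` case -/
lemma hphi1 (x : Set.Icc 1 (2 * u + 2 * v)) (hc : x.1 ≤ 2 * u)
    (h1 : 1 ≤ 2 * u + 1 - x.1) (h2 : 2 * u + 1 - x.1 ≤ 2 * u + 2 * v) :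
    EqvGen (Rel u v) x (el u v (2 * u + 1 - x.1) h1 h2) := by
  obtain ⟨hb1, hb2⟩ := mem_bounds u v x
  by_cases hcu : x.1 ≤ u
  · exact EqvGen.rel _ _ (Or.inl ⟨hb1, hcu, rfl⟩)
  · refine EqvGen.symm _ _ (EqvGen.rel _ _ (Or.inl ⟨?_, ?_, ?_⟩)) <;>
      simp only [el_val] <;> omega

/-- the `f∪g`-pairing step, `x > 2u` case -/
lemma hphi2 (x : Set.Icc 1 (2 * u + 2 * v)) (hc : 2 * u < x.1)
    (h1 : 1 ≤ 4 * u + 2 * v + 1 - x.1) (h2 : 4 * u + 2 * v + 1 - x.1 ≤ 2 * u + 2 * v) :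
    EqvGen (Rel u v) x (el u v (4 * u + 2 * v + 1 - x.1) h1 h2) := by
  obtain ⟨hb1, hb2⟩ := mem_bounds u v x
  by_cases hcu : x.1 ≤ 2 * u + v
  · exact EqvGen.rel _ _ (Or.inr (Or.inl ⟨hc, hcu, rfl⟩))
  · refine EqvGen.symm _ _ (EqvGen.rel _ _ (Or.inr (Or.inl ⟨?_, ?_, ?_⟩))) <;>
      simp only [el_val] <;> omega

/-- element determined by a residue -/
def elm (hu : 0 < u) (m : ℕ) : Set.Icc 1 (2 * u + 2 * v) :=
  ⟨m % (2 * u + 2 * v) + 1, Set.mem_Icc.mpr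
    ⟨by omega, by have := Nat.mod_lt m (show 0 < 2 * u + 2 * v by omega); omega⟩⟩

lemma elm_val (hu : 0 < u) (m : ℕ) : (elm u v hu m).1 = m % (2 * u + 2 * v) + 1 := rfl

/-- one rotation step: `x ~ x + 2v (mod n)` -/
lemma hstep (hu : 0 < u) (x : Set.Icc 1 (2 * u + 2 * v)) :
    EqvGen (Rel u v) x (elm u v hu (x.1 - 1 + 2 * v)) := by
  obtain ⟨hb1, hb2⟩ := mem_bounds u v x
  by_cases hc : x.1 ≤ 2 * u
  · -- x ~ 2u+1-x ~ n+1-(2u+1-x) = x+2v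
    refine EqvGen.trans _ _ _ (hphi1 u v x hc (by omega) (by omega)) ?_
    have hm0 : (x.1 - 1 + 2 * v) % (2 * u + 2 * v) = x.1 - 1 + 2 * v :=
      Nat.mod_eq_of_lt (by omega)
    have h2 := hpsi u v (el u v (2 * u + 1 - x.1) (by omega) (by omega))
      (by simp only [el_val]; omega) (by simp only [el_val]; omega)
    convert h2 using 2
    apply Subtype.ext
    simp only [elm_val, el_val]
    omega
  · refine EqvGen.trans _ _ _ (hphi2 u v x (by omega) (by omega) (by omega)) ?_
    have hm0 : (x.1 - 1 + 2 * v) % (2 * u + 2 * v) = x.1 - 1 + 2 * v - (2 * u + 2 * v) := by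
      rw [Nat.mod_eq_sub_mod (by omega)]
      exact Nat.mod_eq_of_lt (by omega)
    have h2 := hpsi u v (el u v (4 * u + 2 * v + 1 - x.1) (by omega) (by omega))
      (by simp only [el_val]; omega) (by simp only [el_val]; omega)
    convert h2 using 2
    apply Subtype.ext
    simp only [elm_val, el_val]
    omega

/-- iterated rotation -/
lemma hreach (hu : 0 < u) (t : ℕ) (x : Set.Icc 1 (2 * u + 2 * v)) :
    EqvGen (Rel u v) x (elm u v hu (x.1 - 1 + 2 * v * t)) := by
  induction t with
  | zero =>
    obtain ⟨hb1, hb2⟩ := mem_bounds u v x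
    have : elm u v hu (x.1 - 1 + 2 * v * 0) = x := by
      apply Subtype.ext
      rw [elm_val]
      have : (x.1 - 1 + 2 * v * 0) = x.1 - 1 := by omega
      rw [this, Nat.mod_eq_of_lt (by omega)]
      omega
    rw [this]
    exact EqvGen.refl x
  | succ t ih =>
    refine EqvGen.trans _ _ _ ih ?_
    have hh := hstep u v hu (elm u v hu (x.1 - 1 + 2 * v * t))
    have heq : elm u v hu ((elm u v hu (x.1 - 1 + 2 * v * t)).1 - 1 + 2 * v)
        = elm u v hu (x.1 - 1 + 2 * v * (t + 1)) := by
      apply Subtype.ext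
      simp only [elm_val]
      congr 1
      have h1 : (x.1 - 1 + 2 * v * t) % (2 * u + 2 * v) + 1 - 1 + 2 * v
          = (x.1 - 1 + 2 * v * t) % (2 * u + 2 * v) + 2 * v := by omega
      rw [h1, Nat.mod_add_mod]
      congr 1
      ring
    rw [heq] at hh
    exact hh


lemma gcd_eq : Nat.gcd (2 * v) (2 * u + 2 * v) = 2 * Nat.gcd u v := by
  rw [show 2 * u + 2 * v = 2 * (u + v) by ring, Nat.gcd_mul_left]
  congr 1
  simp [Nat.gcd_comm, Nat.gcd_add_self_left]

/-- same residue mod 2·gcd implies equivalent -/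
lemma hmod (hu : 0 < u) (hv : 0 < v) (x y : Set.Icc 1 (2 * u + 2 * v))
    (h : x.1 ≡ y.1 [MOD 2 * Nat.gcd u v]) : EqvGen (Rel u v) x y := by
  obtain ⟨hx1, hx2⟩ := mem_bounds u v x
  obtain ⟨hy1, hy2⟩ := mem_bounds u v y
  have hgu : Nat.gcd u v ∣ u := Nat.gcd_dvd_left u v
  have hgv : Nat.gcd u v ∣ v := Nat.gcd_dvd_right u v
  have hdn : 2 * Nat.gcd u v ∣ 2 * u + 2 * v := by
    have h0 : 2 * Nat.gcd u v ∣ 2 * (u + v) := mul_dvd_mul_left 2 (dvd_add hgu hgv)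
    rwa [show 2 * (u + v) = 2 * u + 2 * v from by ring] at h0
  -- 2g ∣ (n + y) - x
  have hme : x.1 ≡ 2 * u + 2 * v + y.1 [MOD 2 * Nat.gcd u v] := by
    calc x.1 ≡ y.1 [MOD 2 * Nat.gcd u v] := h
    _ ≡ 0 + y.1 [MOD 2 * Nat.gcd u v] := by rw [Nat.zero_add]
    _ ≡ 2 * u + 2 * v + y.1 [MOD 2 * Nat.gcd u v] :=
        Nat.ModEq.add_right _ ((Nat.modEq_zero_iff_dvd.mpr hdn).symm)
  have hdvd : 2 * Nat.gcd u v ∣ 2 * u + 2 * v + y.1 - x.1 :=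
    (Nat.modEq_iff_dvd' (by omega)).mp hme
  obtain ⟨t, ht⟩ := exists_t (2 * v) (2 * u + 2 * v) (2 * u + 2 * v + y.1 - x.1)
    (by omega) (by rw [gcd_eq u v]; exact hdvd)
  -- now (x - 1 + 2vt) % n = y - 1
  have hkey : (x.1 - 1 + 2 * v * t) % (2 * u + 2 * v) = y.1 - 1 := by
    have h1 : x.1 - 1 + 2 * v * t ≡ x.1 - 1 + (2 * u + 2 * v + y.1 - x.1)
        [MOD 2 * u + 2 * v] := ht.add_left _
    have h2 : x.1 - 1 + (2 * u + 2 * v + y.1 - x.1) = 2 * u + 2 * v + (y.1 - 1) := by omega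
    rw [h2] at h1
    have h3 : 2 * u + 2 * v + (y.1 - 1) ≡ y.1 - 1 [MOD 2 * u + 2 * v] :=
      (Nat.ModEq.add_right _ (Nat.modEq_zero_iff_dvd.mpr dvd_rfl)).trans (by rw [Nat.zero_add])
    have h4 := h1.trans h3
    have h5 : (x.1 - 1 + 2 * v * t) % (2 * u + 2 * v) = (y.1 - 1) % (2 * u + 2 * v) := h4
    rwa [Nat.mod_eq_of_lt (show y.1 - 1 < 2 * u + 2 * v by omega)] at h5
  have heq : elm u v hu (x.1 - 1 + 2 * v * t) = y := by
    apply Subtype.ext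
    rw [elm_val, hkey]
    omega
  have := hreach u v hu t x
  rwa [heq] at this


lemma two_gcd_dvd : 2 * Nat.gcd u v ∣ 2 * u + 2 * v := by
  have h0 : 2 * Nat.gcd u v ∣ 2 * (u + v) :=
    mul_dvd_mul_left 2 (dvd_add (Nat.gcd_dvd_left u v) (Nat.gcd_dvd_right u v))
  rwa [show 2 * (u + v) = 2 * u + 2 * v from by ring] at h0

/-- x + y ≡ 1 mod 2·gcd implies equivalent -/
lemma hflip (hu : 0 < u) (hv : 0 < v) (x y : Set.Icc 1 (2 * u + 2 * v))
    (h : x.1 + y.1 ≡ 1 [MOD 2 * Nat.gcd u v]) : EqvGen (Rel u v) x y := by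
  obtain ⟨hx1, hx2⟩ := mem_bounds u v x
  obtain ⟨hy1, hy2⟩ := mem_bounds u v y
  have hz := hpsi u v x (by omega) (by omega)
  refine EqvGen.trans _ _ _ hz (hmod u v hu hv _ y ?_)
  rw [el_val]
  -- (n+1-x) ≡ y [MOD 2g] since both plus x are ≡ 1
  have h1 : (2 * u + 2 * v + 1 - x.1) + x.1 ≡ 1 [MOD 2 * Nat.gcd u v] := by
    rw [show (2 * u + 2 * v + 1 - x.1) + x.1 = 2 * u + 2 * v + 1 by omega]
    calc 2 * u + 2 * v + 1 ≡ 0 + 1 [MOD 2 * Nat.gcd u v] :=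
          Nat.ModEq.add_right 1 (Nat.modEq_zero_iff_dvd.mpr (two_gcd_dvd u v))
    _ = 1 := by omega
  have h2 : (2 * u + 2 * v + 1 - x.1) + x.1 ≡ y.1 + x.1 [MOD 2 * Nat.gcd u v] := by
    refine h1.trans ?_
    rw [Nat.add_comm y.1 x.1]
    exact h.symm
  exact Nat.ModEq.add_right_cancel' x.1 h2

/-- every element is equivalent to its invariant value -/
lemma reachF (hu : 0 < u) (hv : 0 < v) (x y : Set.Icc 1 (2 * u + 2 * v))
    (hy : y.1 = F (Nat.gcd u v) x.1) : EqvGen (Rel u v) x y := by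
  have hg : 0 < Nat.gcd u v := Nat.gcd_pos_of_pos_left v hu
  obtain ⟨hx1, hx2⟩ := mem_bounds u v x
  have hml := Nat.mod_lt (x.1 - 1) (show 0 < 2 * Nat.gcd u v by omega)
  have hrep := rep_modEq (Nat.gcd u v) x.1 hx1
  rcases le_or_gt ((x.1 - 1) % (2 * Nat.gcd u v) + 1) (Nat.gcd u v) with hc | hc
  · apply hmod u v hu hv
    rw [hy]
    have hF : F (Nat.gcd u v) x.1 = (x.1 - 1) % (2 * Nat.gcd u v) + 1 := by
      unfold F; omega
    rw [hF]
    exact hrep.symm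
  · apply hflip u v hu hv
    rw [hy]
    have hF : F (Nat.gcd u v) x.1
        = 2 * Nat.gcd u v + 1 - ((x.1 - 1) % (2 * Nat.gcd u v) + 1) := by
      unfold F; omega
    rw [hF]
    have h1 : ((x.1 - 1) % (2 * Nat.gcd u v) + 1)
        + (2 * Nat.gcd u v + 1 - ((x.1 - 1) % (2 * Nat.gcd u v) + 1))
        ≡ x.1 + (2 * Nat.gcd u v + 1 - ((x.1 - 1) % (2 * Nat.gcd u v) + 1))
        [MOD 2 * Nat.gcd u v] := hrep.add_right _
    rw [show ((x.1 - 1) % (2 * Nat.gcd u v) + 1)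
        + (2 * Nat.gcd u v + 1 - ((x.1 - 1) % (2 * Nat.gcd u v) + 1))
        = 2 * Nat.gcd u v + 1 by omega] at h1
    refine (h1.symm.trans ?_).symm.symm
    calc 2 * Nat.gcd u v + 1 ≡ 0 + 1 [MOD 2 * Nat.gcd u v] :=
          Nat.ModEq.add_right 1 (Nat.modEq_zero_iff_dvd.mpr dvd_rfl)
    _ = 1 := by omega

end Stmt0Aux

open Stmt0Aux in
/-- The number of orbits of `{1,…,2u+2v}` under the equivalence relation
generated by the three decreasing pairings `f : [1,u] → [u+1,2u]`, `x ↦ 2u+1-x`;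
`g : [2u+1,2u+v] → [2u+v+1,2u+2v]`, `x ↦ 4u+2v+1-x`; and
`h : [1,u+v] → [u+v+1,2u+2v]`, `x ↦ 2u+2v+1-x`, equals `gcd(u,v)`. -/
theorem stmt0 (u v : ℕ) (hu : 0 < u) (hv : 0 < v) :
    Nat.card (Quot (fun x y : Set.Icc 1 (2 * u + 2 * v) =>
      (1 ≤ x.1 ∧ x.1 ≤ u ∧ y.1 = 2 * u + 1 - x.1) ∨
      (2 * u + 1 ≤ x.1 ∧ x.1 ≤ 2 * u + v ∧ y.1 = 4 * u + 2 * v + 1 - x.1) ∨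
      (1 ≤ x.1 ∧ x.1 ≤ u + v ∧ y.1 = 2 * u + 2 * v + 1 - x.1))) = Nat.gcd u v := by
  show Nat.card (Quot (Rel u v)) = Nat.gcd u v
  have hg : 0 < Nat.gcd u v := Nat.gcd_pos_of_pos_left v hu
  have hgu : Nat.gcd u v ≤ u := Nat.gcd_le_left v hu
  have hdvd := two_gcd_dvd (u := u) (v := v)
  have hgu' : Nat.gcd u v ∣ u := Nat.gcd_dvd_left u v
  have hgv' : Nat.gcd u v ∣ v := Nat.gcd_dvd_right u v
  have hresp : ∀ a b, Rel u v a b → F (Nat.gcd u v) a.1 = F (Nat.gcd u v) b.1 := by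
    rintro a b hab
    obtain ⟨ha1, ha2⟩ := mem_bounds u v a
    obtain ⟨hb1, hb2⟩ := mem_bounds u v b
    have hsum : ∃ s, a.1 + b.1 = s ∧ 2 * Nat.gcd u v ∣ s - 1 ∧ 1 ≤ s := by
      rcases hab with ⟨h1, h2, h3⟩ | ⟨h1, h2, h3⟩ | ⟨h1, h2, h3⟩
      · refine ⟨2 * u + 1, by omega, ?_, by omega⟩
        rw [show 2 * u + 1 - 1 = 2 * u by omega]
        exact mul_dvd_mul_left 2 hgu'
      · refine ⟨4 * u + 2 * v + 1, by omega, ?_, by omega⟩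
        rw [show 4 * u + 2 * v + 1 - 1 = 2 * (2 * u + v) by omega]
        exact mul_dvd_mul_left 2 (dvd_add (hgu'.mul_left 2) hgv')
      · refine ⟨2 * u + 2 * v + 1, by omega, ?_, by omega⟩
        rw [show 2 * u + 2 * v + 1 - 1 = 2 * u + 2 * v by omega]
        exact hdvd
    obtain ⟨s, hs1, hs2, hs3⟩ := hsum
    refine F_flip _ _ _ hg ha1 hb1 ?_
    rw [hs1]
    exact ((Nat.modEq_iff_dvd' hs3).mpr hs2).symm
  set G : Fin (Nat.gcd u v) → Quot (Rel u v) := fun k =>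
    Quot.mk _ (el u v (k.1 + 1) (by omega) (by omega)) with hG
  have hinj : Function.Injective G := by
    intro k1 k2 hkk
    have h1 := congrArg (Quot.lift (fun x => F (Nat.gcd u v) x.1) hresp) hkk
    have h2 : F (Nat.gcd u v) (k1.1 + 1) = F (Nat.gcd u v) (k2.1 + 1) := h1
    rw [F_eq_self _ _ hg (by omega) (by omega),
        F_eq_self _ _ hg (by omega) (by omega)] at h2
    exact Fin.ext (by omega)
  have hsurj : Function.Surjective G := by
    intro q
    induction q using Quot.ind with
    | mk x =>
      obtain ⟨hx1, hx2⟩ := mem_bounds u v x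
      have hFm := F_mem (Nat.gcd u v) x.1 hg hx1
      refine ⟨⟨F (Nat.gcd u v) x.1 - 1, by omega⟩, ?_⟩
      show Quot.mk _ (el u v (F (Nat.gcd u v) x.1 - 1 + 1) _ _) = Quot.mk _ x
      refine (Quot.eqvGen_sound (EqvGen.symm _ _ (reachF u v hu hv x _ ?_)))
      rw [el_val]
      omega
  have hcard := Nat.card_eq_of_bijective G ⟨hinj, hsurj⟩
  rw [Nat.card_eq_fintype_card, Fintype.card_fin] at hcard
  exact hcard.symm
end

section
/- Let u, v be positive integers with gcd(u,v) = 1. Then the set {1,...,2u+2v} has exactly one orbit under the equivalence relation generated by the three decreasing pairings f(x) = 2u+1-x on [1,u], g(x) = 4u+2v+1-x on [2u+1,2u+v], and h(x) = 2u+2v+1-x on [1,u+v]; i.e., the generated equivalence relation identifies all points of {1,...,2u+2v}. -/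
def myR (u v : ℕ) (x y : Set.Icc 1 (2 * u + 2 * v)) : Prop :=
  (1 ≤ x.1 ∧ x.1 ≤ u ∧ y.1 = 2 * u + 1 - x.1) ∨
  (2 * u + 1 ≤ x.1 ∧ x.1 ≤ 2 * u + v ∧ y.1 = 4 * u + 2 * v + 1 - x.1) ∨
  (1 ≤ x.1 ∧ x.1 ≤ u + v ∧ y.1 = 2 * u + 2 * v + 1 - x.1)

def nxt (u v a : ℕ) : ℕ := if a ≤ 2*u then a + 2*v else a - 2*u

section
variable (u v : ℕ)

lemma mem_bd {a : ℕ} (h : a ∈ Set.Icc 1 (2*u+2*v)) : 1 ≤ a ∧ a ≤ 2*u+2*v :=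
  Set.mem_Icc.mp h

lemma hpair (x y : Set.Icc 1 (2*u+2*v)) (hxy : x.1 + y.1 = 2*u + 2*v + 1) :
    Relation.EqvGen (myR u v) x y := by
  obtain ⟨hx1, hx2⟩ := mem_bd u v x.2
  obtain ⟨hy1, hy2⟩ := mem_bd u v y.2
  rcases le_or_gt x.1 (u+v) with h | h
  · exact .rel _ _ (Or.inr (Or.inr ⟨hx1, h, by omega⟩))
  · exact .symm _ _ (.rel _ _ (Or.inr (Or.inr ⟨hy1, by omega, by omega⟩)))

lemma fpair (x y : Set.Icc 1 (2*u+2*v)) (hxy : x.1 + y.1 = 2*u + 1) :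
    Relation.EqvGen (myR u v) x y := by
  obtain ⟨hx1, hx2⟩ := mem_bd u v x.2
  obtain ⟨hy1, hy2⟩ := mem_bd u v y.2
  rcases le_or_gt x.1 u with h | h
  · exact .rel _ _ (Or.inl ⟨hx1, h, by omega⟩)
  · exact .symm _ _ (.rel _ _ (Or.inl ⟨hy1, by omega, by omega⟩))

lemma gpair (x y : Set.Icc 1 (2*u+2*v)) (hx : 2*u+1 ≤ x.1) (hy : 2*u+1 ≤ y.1)
    (hxy : x.1 + y.1 = 4*u + 2*v + 1) :
    Relation.EqvGen (myR u v) x y := by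
  rcases le_or_gt x.1 (2*u+v) with h | h
  · exact .rel _ _ (Or.inr (Or.inl ⟨hx, h, by omega⟩))
  · exact .symm _ _ (.rel _ _ (Or.inr (Or.inl ⟨hy, by omega, by omega⟩)))

lemma nxt_mem {a : ℕ} (hv : 0 < v) (h : a ∈ Set.Icc 1 (2*u+2*v)) :
    nxt u v a ∈ Set.Icc 1 (2*u+2*v) := by
  obtain ⟨h1, h2⟩ := mem_bd u v h
  unfold nxt
  split <;> exact Set.mem_Icc.mpr ⟨by omega, by omega⟩

lemma iter_mem {a : ℕ} (hv : 0 < v) (h : a ∈ Set.Icc 1 (2*u+2*v)) (k : ℕ) :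
    (nxt u v)^[k] a ∈ Set.Icc 1 (2*u+2*v) := by
  induction k generalizing a with
  | zero => simpa using h
  | succ k ih => rw [Function.iterate_succ_apply]; exact ih (nxt_mem u v hv h)

lemma rot (hv : 0 < v) (a : ℕ) (ha : a ∈ Set.Icc 1 (2*u+2*v))
    (hb : nxt u v a ∈ Set.Icc 1 (2*u+2*v)) :
    Relation.EqvGen (myR u v) ⟨a, ha⟩ ⟨nxt u v a, hb⟩ := by
  obtain ⟨h1, h2⟩ := mem_bd u v ha
  rcases le_or_gt a (2*u) with h3 | h3
  · have hnxt : nxt u v a = a + 2*v := if_pos h3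
    have hm : (2*u+1-a) ∈ Set.Icc 1 (2*u+2*v) := Set.mem_Icc.mpr ⟨by omega, by omega⟩
    refine .trans _ ⟨2*u+1-a, hm⟩ _
      (fpair u v _ _ (show a + (2*u+1-a) = 2*u+1 by omega)) ?_
    exact hpair u v _ _ (show (2*u+1-a) + nxt u v a = 2*u+2*v+1 by rw [hnxt]; omega)
  · have hnxt : nxt u v a = a - 2*u := if_neg (by omega)
    have hm : (4*u+2*v+1-a) ∈ Set.Icc 1 (2*u+2*v) := Set.mem_Icc.mpr ⟨by omega, by omega⟩
    refine .trans _ ⟨4*u+2*v+1-a, hm⟩ _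
      (gpair u v _ _ (show 2*u+1 ≤ a by omega) (show 2*u+1 ≤ 4*u+2*v+1-a by omega)
        (show a + (4*u+2*v+1-a) = 4*u+2*v+1 by omega)) ?_
    exact hpair u v _ _ (show (4*u+2*v+1-a) + nxt u v a = 2*u+2*v+1 by rw [hnxt]; omega)

lemma rotk (hv : 0 < v) (k : ℕ) (a : ℕ) (ha : a ∈ Set.Icc 1 (2*u+2*v))
    (hb : (nxt u v)^[k] a ∈ Set.Icc 1 (2*u+2*v)) :
    Relation.EqvGen (myR u v) ⟨a, ha⟩ ⟨(nxt u v)^[k] a, hb⟩ := by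
  induction k generalizing a with
  | zero => exact .refl _
  | succ k ih =>
      have hm := nxt_mem u v hv ha
      refine .trans _ ⟨nxt u v a, hm⟩ _ (rot u v hv a ha hm) ?_
      have := ih (nxt u v a) hm (by rwa [← Function.iterate_succ_apply])
      convert this using 2 <;> rw [Function.iterate_succ_apply]

lemma nxt_cast {a : ℕ} (h : 1 ≤ a) :
    ((nxt u v a : ℕ) : ZMod (2*u+2*v)) = (a : ZMod (2*u+2*v)) + 2*v := by
  have h0 : ((2*u+2*v : ℕ) : ZMod (2*u+2*v)) = 0 := ZMod.natCast_self _
  unfold nxt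
  rcases le_or_gt a (2*u) with h3 | h3
  · rw [if_pos h3]; push_cast; ring
  · rw [if_neg (by omega)]
    rw [Nat.cast_sub (by omega)]
    push_cast at h0 ⊢
    linear_combination -h0

lemma iter_cast {a : ℕ} (h1 : 1 ≤ a) (h2 : a ≤ 2*u+2*v) (hv : 0 < v) (k : ℕ) :
    (((nxt u v)^[k] a : ℕ) : ZMod (2*u+2*v)) = (a : ZMod (2*u+2*v)) + 2*v*k := by
  induction k generalizing a with
  | zero => simp
  | succ k ih =>
      rw [Function.iterate_succ_apply]
      have hm := mem_bd u v (nxt_mem u v hv (Set.mem_Icc.mpr ⟨h1, h2⟩))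
      rw [ih hm.1 hm.2, nxt_cast u v h1]
      push_cast
      ring

lemma mycast_inj {a b : ℕ} (h1 : 1 ≤ a) (h2 : a ≤ 2*u+2*v) (h3 : 1 ≤ b) (h4 : b ≤ 2*u+2*v)
    (h : (a : ZMod (2*u+2*v)) = (b : ZMod (2*u+2*v))) : a = b := by
  have hmod : a % (2*u+2*v) = b % (2*u+2*v) := (ZMod.natCast_eq_natCast_iff a b _).mp h
  rcases Nat.lt_or_ge a (2*u+2*v) with hA | hA
  · rw [Nat.mod_eq_of_lt hA] at hmod
    rcases Nat.lt_or_ge b (2*u+2*v) with hB | hB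
    · rwa [Nat.mod_eq_of_lt hB] at hmod
    · have hbn : b = 2*u+2*v := le_antisymm h4 hB
      rw [hbn, Nat.mod_self] at hmod; omega
  · have han : a = 2*u+2*v := le_antisymm h2 hA
    rw [han, Nat.mod_self] at hmod
    rcases Nat.lt_or_ge b (2*u+2*v) with hB | hB
    · rw [Nat.mod_eq_of_lt hB] at hmod; omega
    · omega

lemma connect (hu : 0 < u) (hv : 0 < v) (hcop : Nat.gcd u v = 1)
    (a b : ℕ) (ha : a ∈ Set.Icc 1 (2*u+2*v)) (hb : b ∈ Set.Icc 1 (2*u+2*v))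
    (hpar : a % 2 = b % 2) :
    Relation.EqvGen (myR u v) ⟨a, ha⟩ ⟨b, hb⟩ := by
  obtain ⟨ha1, ha2⟩ := mem_bd u v ha
  obtain ⟨hb1, hb2⟩ := mem_bd u v hb
  haveI : NeZero (2*u+2*v) := ⟨by omega⟩
  -- Bezout
  have hg : Nat.gcd v (u+v) = 1 := by
    rw [Nat.gcd_add_self_right, Nat.gcd_comm]; exact hcop
  have hbez : (1 : ℤ) = v * Nat.gcdA v (u+v) + (u+v) * Nat.gcdB v (u+v) := by
    have h := Nat.gcd_eq_gcd_ab v (u+v)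
    rw [hg] at h
    exact_mod_cast h
  set X : ℤ := Nat.gcdA v (u+v)
  set Y : ℤ := Nat.gcdB v (u+v)
  have h0 : ((2*u+2*v : ℕ) : ZMod (2*u+2*v)) = 0 := ZMod.natCast_self _
  have key2 : (2 * (v : ZMod (2*u+2*v))) * (X : ZMod (2*u+2*v)) = 2 := by
    have h1 : ((1:ℤ) : ZMod (2*u+2*v)) = ((v * X + (u+v) * Y : ℤ) : ZMod (2*u+2*v)) := by
      rw [← hbez]
    push_cast at h1 h0
    linear_combination (-2 : ZMod (2*u+2*v)) * h1 - ((Y : ZMod (2*u+2*v))) * h0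
  obtain ⟨s, hs⟩ : ∃ s : ℤ, (b : ℤ) - a = 2 * s := ⟨((b:ℤ) - a)/2, by omega⟩
  set k : ℕ := (((X * s : ℤ) : ZMod (2*u+2*v))).val with hk
  have hkc : ((k : ℕ) : ZMod (2*u+2*v)) = ((X * s : ℤ) : ZMod (2*u+2*v)) :=
    ZMod.natCast_rightInverse _
  have hiter := iter_cast u v ha1 ha2 hv k
  have hz : (((nxt u v)^[k] a : ℕ) : ZMod (2*u+2*v)) = (b : ZMod (2*u+2*v)) := by
    rw [hiter, hkc]
    have : (2 : ZMod (2*u+2*v)) * s = ((b:ℤ) : ZMod (2*u+2*v)) - ((a:ℤ) : ZMod (2*u+2*v)) := by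
      rw [← Int.cast_sub, hs]; push_cast; ring
    push_cast at this ⊢
    linear_combination this + ((s : ZMod (2*u+2*v))) * key2
  have hmem := mem_bd u v (iter_mem u v hv ha k)
  have heq : (nxt u v)^[k] a = b := mycast_inj u v hmem.1 hmem.2 hb1 hb2 hz
  have := rotk u v hv k a ha (iter_mem u v hv ha k)
  rwa [show (⟨(nxt u v)^[k] a, iter_mem u v hv ha k⟩ : Set.Icc 1 (2*u+2*v)) = ⟨b, hb⟩
    from Subtype.ext heq] at this

end

/-- If `gcd(u,v) = 1` then `{1,…,2u+2v}` has exactly one orbit under the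
three decreasing pairings: the generated equivalence relation identifies all points. -/
theorem stmt1 (u v : ℕ) (hu : 0 < u) (hv : 0 < v) (hcop : Nat.gcd u v = 1) :
    ∀ x y : Set.Icc 1 (2 * u + 2 * v),
      Relation.EqvGen (fun x y : Set.Icc 1 (2 * u + 2 * v) =>
        (1 ≤ x.1 ∧ x.1 ≤ u ∧ y.1 = 2 * u + 1 - x.1) ∨
        (2 * u + 1 ≤ x.1 ∧ x.1 ≤ 2 * u + v ∧ y.1 = 4 * u + 2 * v + 1 - x.1) ∨
        (1 ≤ x.1 ∧ x.1 ≤ u + v ∧ y.1 = 2 * u + 2 * v + 1 - x.1)) x y := by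
  have key : ∀ x : Set.Icc 1 (2*u+2*v),
      Relation.EqvGen (myR u v) x ⟨1, Set.mem_Icc.mpr ⟨le_refl 1, by omega⟩⟩ := by
    intro x
    obtain ⟨hx1, hx2⟩ := mem_bd u v x.2
    rcases Nat.even_or_odd x.1 with he | ho
    · have h1 : Relation.EqvGen (myR u v) x ⟨2*u+2*v, Set.mem_Icc.mpr ⟨by omega, le_refl _⟩⟩ := by
        have := connect u v hu hv hcop x.1 (2*u+2*v) x.2 (Set.mem_Icc.mpr ⟨by omega, le_refl _⟩)
          (by obtain ⟨t, ht⟩ := he; omega)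
        simpa using this
      refine .trans _ _ _ h1 ?_
      exact .symm _ _ (hpair u v _ _ (show 1 + (2*u+2*v) = 2*u+2*v+1 by omega))
    · have := connect u v hu hv hcop x.1 1 x.2 (Set.mem_Icc.mpr ⟨le_refl 1, by omega⟩)
        (by obtain ⟨t, ht⟩ := ho; omega)
      simpa using this
  intro x y
  exact .trans _ _ _ (key x) (.symm _ _ (key y))
end

section
/- Trimming preserves orbits: let g: [a,b] → [c,d] be a decreasing bijection (g(x) = a+d-x) on subintervals of {1,...,N} with overlapping domain and range (c ≤ b), and suppose a+d is even. Let g' be the restriction of g to [a, (a+d)/2 - 1] (with range [(a+d)/2 + 1, d]). Then the equivalence relation on {1,...,N} generated by g together with any fixed collection of other pairings equals the equivalence relation generated by g' together with that same collection. -/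
lemma eqvGen_closure {α : Type*} {r s : α → α → Prop}
    (h : ∀ x y, r x y → Relation.EqvGen s x y) :
    ∀ x y, Relation.EqvGen r x y → Relation.EqvGen s x y := by
  intro x y hxy
  induction hxy with
  | rel x y hr => exact h x y hr
  | refl x => exact Relation.EqvGen.refl x
  | symm x y _ ih => exact Relation.EqvGen.symm x y ih
  | trans x y z _ _ ih1 ih2 => exact Relation.EqvGen.trans x y z ih1 ih2

/-- Trimming preserves orbits.  For a decreasing pairing
`g : [a,b] → [c,d]`, `g(x) = a+d-x`, with overlapping domain and range (`c ≤ b`)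
and `a+d` even, replacing `g` by its restriction `g'` to `[a, (a+d)/2 - 1]`
does not change the equivalence relation generated together with any fixed
collection `R` of other pairings. -/
theorem stmt2 (N a b c d : ℕ) (ha : 1 ≤ a) (hab : a ≤ b) (hbd : b ≤ d) (hdN : d ≤ N)
    (hc : c = a + d - b) (hcd : c ≤ d) (hwidth : b - a = d - c) (hover : c ≤ b)
    (heven : Even (a + d)) (R : ℕ → ℕ → Prop) :
    Relation.EqvGen (fun x y => (a ≤ x ∧ x ≤ b ∧ y = a + d - x) ∨ R x y) =
    Relation.EqvGen (fun x y => (a ≤ x ∧ x ≤ (a + d) / 2 - 1 ∧ y = a + d - x) ∨ R x y) := by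
  obtain ⟨m, hm⟩ := heven
  have hm2 : a + d = 2 * m := by omega
  have hmdiv : (a + d) / 2 = m := by omega
  have hmb : m ≤ b := by omega
  ext x y
  constructor
  · apply eqvGen_closure
    rintro x y (⟨h1, h2, h3⟩ | hR)
    · -- x in [a,b], y = a+d-x
      rcases lt_trichotomy x m with hx | hx | hx
      · exact Relation.EqvGen.rel _ _ (Or.inl ⟨h1, by omega, h3⟩)
      · have : y = x := by omega
        rw [this]; exact Relation.EqvGen.refl x
      · -- x > m, so y ≤ m - 1, use symm
        apply Relation.EqvGen.symm
        exact Relation.EqvGen.rel _ _ (Or.inl ⟨by omega, by omega, by omega⟩)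
    · exact Relation.EqvGen.rel _ _ (Or.inr hR)
  · apply eqvGen_closure
    rintro x y (⟨h1, h2, h3⟩ | hR)
    · exact Relation.EqvGen.rel _ _ (Or.inl ⟨h1, by omega, h3⟩)
    · exact Relation.EqvGen.rel _ _ (Or.inr hR)
end

section
/- Transmission preserves orbits: let g₁ be a pairing on {1,...,N} whose domain and range are disjoint, and let g₂ be a pairing whose range lies in the range of g₁ but whose domain does not. Then replacing g₂ by g₂' = g₁⁻¹ ∘ g₂ does not change the equivalence relation generated by {g₁, g₂} (together with any other fixed pairings). -/
/-- Transmission preserves orbits.  Let `g₁ : [a₁,b₁] → [c₁,d₁]` be a pairing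
(a monotone bijection of integer subintervals of `{1,…,N}`, with inverse `i₁`) whose
domain and range are disjoint, and let `g₂ : [a₂,b₂] → [c₂,d₂]` be a pairing whose range
lies in the range of `g₁` but whose domain does not meet the range of `g₁`.  Then
replacing `g₂` by `g₂' = g₁⁻¹ ∘ g₂` does not change the equivalence relation generated
by `{g₁, g₂}` together with any other fixed pairings `R`. -/
theorem stmt3 (N a₁ b₁ c₁ d₁ a₂ b₂ c₂ d₂ : ℕ) (g₁ i₁ g₂ : ℕ → ℕ) (R : ℕ → ℕ → Prop)
    (ha₁ : 1 ≤ a₁) (hab₁ : a₁ ≤ b₁) (hb₁ : b₁ ≤ N) (hc₁ : 1 ≤ c₁) (hcd₁ : c₁ ≤ d₁)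
    (hd₁ : d₁ ≤ N) (ha₂ : 1 ≤ a₂) (hab₂ : a₂ ≤ b₂) (hb₂ : b₂ ≤ N) (hcd₂ : c₂ ≤ d₂)
    (hbij₁ : Set.BijOn g₁ (Set.Icc a₁ b₁) (Set.Icc c₁ d₁))
    (hmono₁ : StrictMonoOn g₁ (Set.Icc a₁ b₁) ∨ StrictAntiOn g₁ (Set.Icc a₁ b₁))
    (hinv₁ : ∀ x ∈ Set.Icc a₁ b₁, i₁ (g₁ x) = x)
    (hinv₁' : ∀ y ∈ Set.Icc c₁ d₁, i₁ y ∈ Set.Icc a₁ b₁ ∧ g₁ (i₁ y) = y)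
    (hdisj₁ : Disjoint (Set.Icc a₁ b₁) (Set.Icc c₁ d₁))
    (hbij₂ : Set.BijOn g₂ (Set.Icc a₂ b₂) (Set.Icc c₂ d₂))
    (hmono₂ : StrictMonoOn g₂ (Set.Icc a₂ b₂) ∨ StrictAntiOn g₂ (Set.Icc a₂ b₂))
    (hrange : Set.Icc c₂ d₂ ⊆ Set.Icc c₁ d₁)
    (hdom : Disjoint (Set.Icc a₂ b₂) (Set.Icc c₁ d₁)) :
    Relation.EqvGen (fun x y =>
        (a₁ ≤ x ∧ x ≤ b₁ ∧ y = g₁ x) ∨ (a₂ ≤ x ∧ x ≤ b₂ ∧ y = g₂ x) ∨ R x y) =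
    Relation.EqvGen (fun x y =>
        (a₁ ≤ x ∧ x ≤ b₁ ∧ y = g₁ x) ∨ (a₂ ≤ x ∧ x ≤ b₂ ∧ y = i₁ (g₂ x)) ∨ R x y) := by
  have key : ∀ x, a₂ ≤ x → x ≤ b₂ → i₁ (g₂ x) ∈ Set.Icc a₁ b₁ ∧ g₁ (i₁ (g₂ x)) = g₂ x := by
    intro x h1 h2
    exact hinv₁' _ (hrange (hbij₂.mapsTo ⟨h1, h2⟩))
  funext x y
  apply propext
  constructor
  · intro h
    induction h with
    | rel a b hab =>
      rcases hab with h | ⟨h1, h2, h3⟩ | h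
      · exact Relation.EqvGen.rel _ _ (Or.inl h)
      · obtain ⟨hi, hg⟩ := key a h1 h2
        have e1 : Relation.EqvGen (fun x y =>
            (a₁ ≤ x ∧ x ≤ b₁ ∧ y = g₁ x) ∨ (a₂ ≤ x ∧ x ≤ b₂ ∧ y = i₁ (g₂ x)) ∨ R x y)
            a (i₁ (g₂ a)) :=
          Relation.EqvGen.rel _ _ (Or.inr (Or.inl ⟨h1, h2, rfl⟩))
        have e2 : Relation.EqvGen (fun x y =>
            (a₁ ≤ x ∧ x ≤ b₁ ∧ y = g₁ x) ∨ (a₂ ≤ x ∧ x ≤ b₂ ∧ y = i₁ (g₂ x)) ∨ R x y)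
            (i₁ (g₂ a)) b :=
          Relation.EqvGen.rel _ _ (Or.inl ⟨hi.1, hi.2, by rw [hg, ← h3]⟩)
        exact e1.trans _ _ _ e2
      · exact Relation.EqvGen.rel _ _ (Or.inr (Or.inr h))
    | refl a => exact Relation.EqvGen.refl a
    | symm a b _ ih => exact ih.symm _ _
    | trans a b c _ _ ih1 ih2 => exact ih1.trans _ _ _ ih2
  · intro h
    induction h with
    | rel a b hab =>
      rcases hab with h | ⟨h1, h2, h3⟩ | h
      · exact Relation.EqvGen.rel _ _ (Or.inl h)
      · obtain ⟨hi, hg⟩ := key a h1 h2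
        have e1 : Relation.EqvGen (fun x y =>
            (a₁ ≤ x ∧ x ≤ b₁ ∧ y = g₁ x) ∨ (a₂ ≤ x ∧ x ≤ b₂ ∧ y = g₂ x) ∨ R x y)
            a (g₂ a) :=
          Relation.EqvGen.rel _ _ (Or.inr (Or.inl ⟨h1, h2, rfl⟩))
        have e2 : Relation.EqvGen (fun x y =>
            (a₁ ≤ x ∧ x ≤ b₁ ∧ y = g₁ x) ∨ (a₂ ≤ x ∧ x ≤ b₂ ∧ y = g₂ x) ∨ R x y)
            b (g₂ a) :=
          Relation.EqvGen.rel _ _ (Or.inl ⟨by rw [h3]; exact hi.1, by rw [h3]; exact hi.2,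
            by rw [h3, hg]⟩)
        exact e1.trans _ _ _ (e2.symm _ _)
      · exact Relation.EqvGen.rel _ _ (Or.inr (Or.inr h))
    | refl a => exact Relation.EqvGen.refl a
    | symm a b _ ih => exact ih.symm _ _
    | trans a b c _ _ ih1 ih2 => exact ih1.trans _ _ _ ih2
end

section
/- Truncation preserves orbit count: suppose {g} ∪ G is a family of pairings on {1,...,N} and [N'+1, N] is a nonempty terminal subinterval that meets the domain or range of no pairing in G, is disjoint from the domain of g, and is contained in the range [c,N] of g, where g: [a,b] → [c,N] is increasing (g(x) = x + (c - a)). Let g': [a, b-(N-N')] → [c, N'] be the restriction of g. Then the number of orbits of {1,...,N} under {g} ∪ G equals the number of orbits of {1,...,N'} under {g'} ∪ G. -/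
/-!
Every point `x` of the tail `[N'+1, N]` is paired only with `x - k`, by `g`. Folding the tail
back by `x ↦ x - k` (and fixing `{1,…,N'}`) therefore sends orbits of `{g} ∪ R` to orbits of
`{g'} ∪ R`: the pairs of `g` that `g'` loses are exactly those ending in the tail, and they are
collapsed by the fold. The inclusion `{1,…,N'} ⊆ {1,…,N}` is inverse to the fold on orbits.
-/

def Quot.equivOfMaps {α β : Sort*} {r : α → α → Prop} {s : β → β → Prop}
    (f : α → β) (g : β → α)
    (hf : ∀ x y, r x y → Quot.mk s (f x) = Quot.mk s (f y))
    (hg : ∀ x y, s x y → Quot.mk r (g x) = Quot.mk r (g y))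
    (hgf : ∀ x, Quot.mk r (g (f x)) = Quot.mk r x)
    (hfg : ∀ y, Quot.mk s (f (g y)) = Quot.mk s y) : Quot r ≃ Quot s where
  toFun := Quot.lift (fun x => Quot.mk s (f x)) hf
  invFun := Quot.lift (fun y => Quot.mk r (g y)) hg
  left_inv := Quot.ind hgf
  right_inv := Quot.ind hfg

namespace ShiftPairing

def rel (L a b k : ℕ) (R : ℕ → ℕ → Prop) (x y : Set.Icc 1 L) : Prop :=
  (a ≤ x.1 ∧ x.1 ≤ b ∧ y.1 = x.1 + k) ∨ R x.1 y.1

def foldTail (N' k x : ℕ) : ℕ := if x ≤ N' then x else x - k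

theorem foldTail_of_le {N' k x : ℕ} (h : x ≤ N') : foldTail N' k x = x := if_pos h

theorem foldTail_of_lt {N' k x : ℕ} (h : N' < x) : foldTail N' k x = x - k :=
  if_neg (Nat.not_le.mpr h)

variable {N N' a b k : ℕ} {R : ℕ → ℕ → Prop}

theorem mapsTo_foldTail (ha : 1 ≤ a) (hN : N ≤ b + k) (hcN' : a + k ≤ N' + 1) (hbN' : b ≤ N') :
    Set.MapsTo (foldTail N' k) (Set.Icc 1 N) (Set.Icc 1 N') := by
  intro x ⟨hx1, hxN⟩
  unfold foldTail
  split_ifs <;> constructor <;> omega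

def fold (ha : 1 ≤ a) (hN : N ≤ b + k) (hcN' : a + k ≤ N' + 1) (hbN' : b ≤ N') :
    Set.Icc 1 N → Set.Icc 1 N' :=
  (mapsTo_foldTail ha hN hcN' hbN').restrict _ _ _

theorem coe_fold (ha : 1 ≤ a) (hN : N ≤ b + k) (hcN' : a + k ≤ N' + 1) (hbN' : b ≤ N')
    (x : Set.Icc 1 N) : (fold ha hN hcN' hbN' x : ℕ) = foldTail N' k x :=
  rfl

theorem mk_fold_eq_of_rel (ha : 1 ≤ a) (hN : N ≤ b + k) (hcN' : a + k ≤ N' + 1)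
    (hbN' : b ≤ N') (hR : ∀ x y, R x y → 1 ≤ x ∧ x ≤ N' ∧ 1 ≤ y ∧ y ≤ N')
    {x y : Set.Icc 1 N} (hxy : rel N a b k R x y) :
    Quot.mk (rel N' a (b - (N - N')) k R) (fold ha hN hcN' hbN' x) =
      Quot.mk _ (fold ha hN hcN' hbN' y) := by
  rcases hxy with ⟨hax, hxb, hy⟩ | hr
  · have hfx := foldTail_of_le (k := k) (hxb.trans hbN')
    rcases le_or_gt y.1 N' with hyN' | hyN'
    · have hfy := foldTail_of_le (k := k) hyN'
      refine Quot.sound (Or.inl ⟨?_, ?_, ?_⟩) <;> simp only [coe_fold] <;> omega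
    · have hfy := foldTail_of_lt (k := k) hyN'
      exact congrArg _ (Subtype.ext (by simp only [coe_fold]; omega))
  · obtain ⟨-, hxN', -, hyN'⟩ := hR _ _ hr
    refine Quot.sound (Or.inr ?_)
    simpa only [coe_fold, foldTail_of_le hxN', foldTail_of_le hyN'] using hr

theorem rel_inclusion (hN'N : N' ≤ N) {x y : Set.Icc 1 N'}
    (hxy : rel N' a (b - (N - N')) k R x y) :
    rel N a b k R (Set.inclusion (Set.Icc_subset_Icc_right hN'N) x)
      (Set.inclusion (Set.Icc_subset_Icc_right hN'N) y) :=
  hxy.imp_left fun ⟨hax, hxb, hy⟩ => ⟨hax, hxb.trans (Nat.sub_le _ _), hy⟩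

theorem mk_inclusion_fold (ha : 1 ≤ a) (hN : N ≤ b + k) (hcN' : a + k ≤ N' + 1)
    (hbN' : b ≤ N') (hN'N : N' ≤ N) (x : Set.Icc 1 N) :
    Quot.mk (rel N a b k R) (Set.inclusion (Set.Icc_subset_Icc_right hN'N)
      (fold ha hN hcN' hbN' x)) = Quot.mk _ x := by
  obtain ⟨hx1, hxN⟩ := x.2
  rcases le_or_gt x.1 N' with hxN' | hxN'
  · exact congrArg _ (Subtype.ext (foldTail_of_le hxN'))
  · have hfx := foldTail_of_lt (k := k) hxN'
    refine Quot.sound (Or.inl ⟨?_, ?_, ?_⟩) <;>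
      simp only [coe_fold] <;> omega

theorem fold_inclusion (ha : 1 ≤ a) (hN : N ≤ b + k) (hcN' : a + k ≤ N' + 1)
    (hbN' : b ≤ N') (hN'N : N' ≤ N) (x : Set.Icc 1 N') :
    fold ha hN hcN' hbN' (Set.inclusion (Set.Icc_subset_Icc_right hN'N) x) = x :=
  Subtype.ext (foldTail_of_le x.2.2)

end ShiftPairing

open ShiftPairing in
theorem stmt5_general (N N' a b k : ℕ) (ha : 1 ≤ a) (hN : N = b + k)
    (hN' : N' < N) (hcN' : a + k ≤ N' + 1) (hbN' : b ≤ N')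
    (R : ℕ → ℕ → Prop)
    (hR : ∀ x y, R x y → 1 ≤ x ∧ x ≤ N' ∧ 1 ≤ y ∧ y ≤ N') :
    Nat.card (Quot (fun x y : Set.Icc 1 N =>
        (a ≤ x.1 ∧ x.1 ≤ b ∧ y.1 = x.1 + k) ∨ R x.1 y.1)) =
    Nat.card (Quot (fun x y : Set.Icc 1 N' =>
        (a ≤ x.1 ∧ x.1 ≤ b - (N - N') ∧ y.1 = x.1 + k) ∨ R x.1 y.1)) :=
  Nat.card_congr <| Quot.equivOfMaps (r := rel N a b k R) (s := rel N' a (b - (N - N')) k R)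
    (fold ha hN.le hcN' hbN')
    (Set.inclusion (Set.Icc_subset_Icc_right hN'.le))
    (fun _ _ => mk_fold_eq_of_rel ha hN.le hcN' hbN' hR)
    (fun _ _ hxy => Quot.sound (rel_inclusion hN'.le hxy))
    (mk_inclusion_fold ha hN.le hcN' hbN' hN'.le)
    (fun x => congrArg _ (fold_inclusion ha hN.le hcN' hbN' hN'.le x))

/-- Truncation preserves the orbit count.  Let `g : [a,b] → [a+k, N]` be the
increasing pairing `g(x) = x + k` (so `N = b + k`), let `[N'+1, N]` be a nonempty terminal
subinterval contained in the range of `g` (`a + k ≤ N' + 1`), disjoint from the domain of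
`g` (`b ≤ N'`), and meeting no other pairing `R` of the family.  Let
`g' : [a, b-(N-N')] → [a+k, N']` be the restriction of `g`.  Then the number of orbits of
`{1,…,N}` under `{g} ∪ R` equals the number of orbits of `{1,…,N'}` under `{g'} ∪ R`. -/
theorem stmt5 (N N' a b k : ℕ) (ha : 1 ≤ a) (hab : a ≤ b) (hN : N = b + k)
    (hN' : N' < N) (hcN' : a + k ≤ N' + 1) (hbN' : b ≤ N')
    (R : ℕ → ℕ → Prop)
    (hR : ∀ x y, R x y → 1 ≤ x ∧ x ≤ N' ∧ 1 ≤ y ∧ y ≤ N') :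
    Nat.card (Quot (fun x y : Set.Icc 1 N =>
        (a ≤ x.1 ∧ x.1 ≤ b ∧ y.1 = x.1 + k) ∨ R x.1 y.1)) =
    Nat.card (Quot (fun x y : Set.Icc 1 N' =>
        (a ≤ x.1 ∧ x.1 ≤ b - (N - N') ∧ y.1 = x.1 + k) ∨ R x.1 y.1)) :=
  stmt5_general N N' a b k ha hN hN' hcN' hbN' R hR
end

section
/- Let u ≥ v ≥ 1 be integers and consider three decreasing pairings on an interval [a,c] of even sub-lengths: f on [a, b] with f(x) = a + b - x (where b = a + 2u, say widths |f| = u, |g| = v, |h| = u+v with c = b + 2v), g on [b, c] with g(x) = b + c - x, and h on [a, c] with h(x) = a + c - x, all restricted to exclude midpoints. One step of the reduction (transmit g by h, truncate h, relabel) produces three pairings of the same form with widths (max(v, u-v), min(v, u-v), u), and the number of orbits is unchanged. Consequently, iterating this step computes gcd(u,v) via Euclid's algorithm, and the number of orbits of the interval under {f,g,h} is gcd(u,v). -/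
/-- The number of orbits of the integer interval `[a, a + 2u + 2v - 1]` under the three
decreasing pairings (reflections with no integer fixed point): `f` reflecting the left
block `[a, a + 2u - 1]` (width `|f| = u`), `g` reflecting the right block
`[a + 2u, a + 2u + 2v - 1]` (width `|g| = v`), and `h` reflecting the whole interval
(width `|h| = u + v`). -/
noncomputable def orbitCount (a u v : ℕ) : ℕ :=
  Nat.card (Quot (fun x y : Set.Icc a (a + 2 * u + 2 * v - 1) =>
    (a ≤ x.1 ∧ x.1 ≤ a + 2 * u - 1 ∧ x.1 + y.1 = 2 * a + 2 * u - 1) ∨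
    (a + 2 * u ≤ x.1 ∧ x.1 ≤ a + 2 * u + 2 * v - 1 ∧
      x.1 + y.1 = 2 * a + 4 * u + 2 * v - 1) ∨
    (x.1 + y.1 = 2 * a + 2 * u + 2 * v - 1)))

lemma exists_mul_mod (m n c : ℕ) (hn : 0 < n) (hd : Nat.gcd m n ∣ c) :
    ∃ k, (m * k) % n = c % n := by
  set d := Nat.gcd m n with hdd
  have hd0 : 0 < d := Nat.gcd_pos_of_pos_right m hn
  obtain ⟨m', hm'⟩ : d ∣ m := Nat.gcd_dvd_left m n
  obtain ⟨n', hn'⟩ : d ∣ n := Nat.gcd_dvd_right m n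
  obtain ⟨c', hc'⟩ := hd
  have hcop : Nat.Coprime m' n' := by
    have h1 : d * Nat.gcd m' n' = d * 1 := by
      rw [← Nat.gcd_mul_left, ← hm', ← hn', mul_one]
    exact Nat.eq_of_mul_eq_mul_left hd0 h1
  have hn'0 : 0 < n' := by
    rcases Nat.eq_zero_or_pos n' with h | h
    · subst h; simp at hn'; omega
    · exact h
  haveI : NeZero n' := ⟨by omega⟩
  set k : ℕ := (((m' : ZMod n')⁻¹ * (c' : ZMod n'))).val with hk
  have key : m' * k ≡ c' [MOD n'] := by
    rw [← ZMod.natCast_eq_natCast_iff]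
    push_cast
    rw [hk, ZMod.natCast_rightInverse _, ← mul_assoc,
      ZMod.coe_mul_inv_eq_one m' hcop, one_mul]
  refine ⟨k, ?_⟩
  have : m * k ≡ c [MOD n] := by
    rw [hm', hn', hc', mul_assoc]
    exact Nat.ModEq.mul_left' _ key
  exact this

def PRel (a u v : ℕ) :
    Set.Icc a (a + 2 * u + 2 * v - 1) → Set.Icc a (a + 2 * u + 2 * v - 1) → Prop :=
  fun x y =>
    (a ≤ x.1 ∧ x.1 ≤ a + 2 * u - 1 ∧ x.1 + y.1 = 2 * a + 2 * u - 1) ∨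
    (a + 2 * u ≤ x.1 ∧ x.1 ≤ a + 2 * u + 2 * v - 1 ∧
      x.1 + y.1 = 2 * a + 4 * u + 2 * v - 1) ∨
    (x.1 + y.1 = 2 * a + 2 * u + 2 * v - 1)

def pmk (a u v : ℕ) (hu : 1 ≤ u) (t : ℕ) (ht : t ≤ 2 * u + 2 * v - 1) : Quot (PRel a u v) :=
  Quot.mk _ ⟨a + t, Set.mem_Icc.mpr ⟨by omega, by omega⟩⟩

lemma pmk_congr (a u v : ℕ) (hu : 1 ≤ u) {s t : ℕ} (hs : s ≤ 2*u+2*v-1) (ht : t ≤ 2*u+2*v-1)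
    (h : s = t) : pmk a u v hu s hs = pmk a u v hu t ht := by subst h; rfl

/-- the h-move -/
lemma pmk_h (a u v : ℕ) (hu : 1 ≤ u) (t : ℕ) (ht : t ≤ 2*u+2*v-1) :
    pmk a u v hu t ht = pmk a u v hu (2*u+2*v-1-t) (by omega) :=
  Quot.sound (Or.inr (Or.inr (by simp only; omega)))

/-- the translation move -/
lemma pmk_T (a u v : ℕ) (hu : 1 ≤ u) (t : ℕ) (ht : t ≤ 2*u+2*v-1) :
    pmk a u v hu t ht = pmk a u v hu ((t + 2*u) % (2*u+2*v))
      (by have := Nat.mod_lt (t + 2*u) (y := 2*u+2*v) (by omega); omega) := by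
  rw [pmk_h a u v hu t ht]
  rcases Nat.lt_or_ge t (2*v) with h | h
  · have e : (t + 2*u) % (2*u+2*v) = t + 2*u := Nat.mod_eq_of_lt (by omega)
    have step : pmk a u v hu (2*u+2*v-1-t) (by omega) = pmk a u v hu (t + 2*u) (by omega) :=
      Quot.sound (Or.inr (Or.inl (by simp only; omega)))
    rw [step]
    exact pmk_congr a u v hu (by omega) _ e.symm
  · have e : (t + 2*u) % (2*u+2*v) = t - 2*v := by
      rw [Nat.mod_eq_sub_mod (by omega)]
      have h2 : t + 2*u - (2*u+2*v) = t - 2*v := by omega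
      rw [h2, Nat.mod_eq_of_lt (by omega)]
    have step : pmk a u v hu (2*u+2*v-1-t) (by omega) = pmk a u v hu (t - 2*v) (by omega) :=
      Quot.sound (Or.inl (by simp only; omega))
    rw [step]
    exact pmk_congr a u v hu (by omega) _ e.symm

lemma pmk_iter (a u v : ℕ) (hu : 1 ≤ u) (t : ℕ) (ht : t ≤ 2*u+2*v-1) (k : ℕ) :
    pmk a u v hu t ht = pmk a u v hu ((t + 2*u*k) % (2*u+2*v))
      (by have := Nat.mod_lt (t + 2*u*k) (y := 2*u+2*v) (by omega); omega) := by
  induction k with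
  | zero =>
    refine pmk_congr a u v hu ht _ ?_
    rw [mul_zero, add_zero, Nat.mod_eq_of_lt (by omega)]
  | succ n ih =>
    rw [ih, pmk_T a u v hu]
    refine pmk_congr a u v hu _ _ ?_
    rw [Nat.mod_add_mod, Nat.mul_succ, ← add_assoc]

lemma pmk_modeq (a u v : ℕ) (hu : 1 ≤ u) {s t : ℕ} (hs : s ≤ 2*u+2*v-1) (ht : t ≤ 2*u+2*v-1)
    (hst : s ≡ t [MOD 2 * Nat.gcd u v]) :
    pmk a u v hu t ht = pmk a u v hu s hs := by
  have hGN : Nat.gcd (2*u) (2*u+2*v) = 2 * Nat.gcd u v := by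
    rw [show 2*u+2*v = 2*v + 2*u by ring, Nat.gcd_add_self_right, Nat.gcd_mul_left]
  set N := 2*u+2*v with hN
  set G := 2 * Nat.gcd u v with hG
  have hGdvdN : G ∣ N := by
    rw [← hGN]; exact Nat.gcd_dvd_right _ _
  set c := s + t * (N - 1) with hc
  have e1 : t + t * (N-1) = t * N := by
    conv_rhs => rw [show N = (N-1)+1 by omega]
    rw [Nat.mul_succ]; ring
  have hdc : G ∣ c := by
    have h0 : c ≡ t + t * (N-1) [MOD G] := Nat.ModEq.add_right _ hst
    rw [e1] at h0
    have h1 : t * N ≡ 0 [MOD G] :=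
      Nat.modEq_zero_iff_dvd.mpr (Dvd.dvd.mul_left hGdvdN t)
    exact Nat.modEq_zero_iff_dvd.mp (h0.trans h1)
  obtain ⟨k, hk⟩ := exists_mul_mod (2*u) N c (by omega) (hGN ▸ hdc)
  rw [pmk_iter a u v hu t ht k]
  refine pmk_congr a u v hu _ hs ?_
  calc (t + 2*u*k) % N = (t % N + (2*u*k) % N) % N := by rw [Nat.add_mod]
    _ = (t % N + c % N) % N := by rw [hk]
    _ = (t + c) % N := by rw [← Nat.add_mod]
    _ = (s + t * N) % N := by rw [hc, ← add_assoc, add_comm t s, add_assoc, e1]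
    _ = s % N := by rw [Nat.add_mul_mod_self_right]
    _ = s := Nat.mod_eq_of_lt (by omega)

/-- every point is connected to its canonical representative in `[0, gcd-1]` -/
lemma pmk_reduce (a u v : ℕ) (hu : 1 ≤ u) (t : ℕ) (ht : t ≤ 2*u+2*v-1) :
    pmk a u v hu t ht
      = pmk a u v hu
          (min (t % (2 * Nat.gcd u v)) (2 * Nat.gcd u v - 1 - t % (2 * Nat.gcd u v)))
          (by
            have hg : 0 < Nat.gcd u v := Nat.gcd_pos_of_pos_left v hu
            have hgu : Nat.gcd u v ≤ u := Nat.le_of_dvd hu (Nat.gcd_dvd_left u v)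
            have := Nat.mod_lt t (y := 2 * Nat.gcd u v) (by omega)
            omega) := by
  have hg : 0 < Nat.gcd u v := Nat.gcd_pos_of_pos_left v hu
  have hgu : Nat.gcd u v ≤ u := Nat.le_of_dvd hu (Nat.gcd_dvd_left u v)
  set G := 2 * Nat.gcd u v with hG
  clear_value G
  have hψ : t % G < G := Nat.mod_lt t (by omega)
  have hmod : t ≡ t % G [MOD G] := (Nat.mod_modEq t G).symm
  rcases le_or_gt (t % G) (G - 1 - t % G) with h | h
  · refine pmk_modeq a u v hu (by omega) ht ?_
    rw [← hG, min_eq_left h]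
    exact hmod.symm
  · rw [pmk_h a u v hu t ht]
    refine pmk_modeq a u v hu (by omega) (by omega) ?_
    rw [← hG, min_eq_right (le_of_lt h)]
    -- goal : G - 1 - t % G ≡ 2*u+2*v-1-t [MOD G]
    have hsum1 : (G - 1 - t % G) + t % G = G - 1 := by omega
    have hsum2 : (2*u+2*v-1-t) + t = 2*u+2*v-1 := by omega
    have hd2u : G ∣ 2*u := hG ▸ mul_dvd_mul_left 2 (Nat.gcd_dvd_left u v)
    have hd2v : G ∣ 2*v := hG ▸ mul_dvd_mul_left 2 (Nat.gcd_dvd_right u v)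
    have hGN : G ∣ 2*u+2*v := dvd_add hd2u hd2v
    have hle : G ≤ 2*u+2*v := Nat.le_of_dvd (by omega) hGN
    have hmm : G - 1 ≡ 2*u+2*v-1 [MOD G] := by
      refine (Nat.modEq_iff_dvd' (by omega)).mpr ?_
      have e : 2*u+2*v-1 - (G-1) = 2*u+2*v - G := by omega
      rw [e]
      exact Nat.dvd_sub hGN dvd_rfl
    have final : (G - 1 - t % G) + t % G ≡ (2*u+2*v-1-t) + t [MOD G] := by
      rw [hsum1, hsum2]; exact hmm
    exact Nat.ModEq.add_right_cancel hmod.symm final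

/-- invariance of the canonical value under the relation -/
lemma prel_inv (a u v : ℕ) (hu : 1 ≤ u) {x y : Set.Icc a (a + 2 * u + 2 * v - 1)}
    (h : PRel a u v x y) :
    min ((x.1 - a) % (2 * Nat.gcd u v)) (2 * Nat.gcd u v - 1 - (x.1 - a) % (2 * Nat.gcd u v))
      = min ((y.1 - a) % (2 * Nat.gcd u v))
          (2 * Nat.gcd u v - 1 - (y.1 - a) % (2 * Nat.gcd u v)) := by
  have hg : 0 < Nat.gcd u v := Nat.gcd_pos_of_pos_left v hu
  set G := 2 * Nat.gcd u v with hG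
  have hG0 : 0 < G := by omega
  have hd2u : G ∣ 2*u := mul_dvd_mul_left 2 (Nat.gcd_dvd_left u v)
  have hd2v : G ∣ 2*v := mul_dvd_mul_left 2 (Nat.gcd_dvd_right u v)
  have hx := x.2
  have hy := y.2
  simp only [Set.mem_Icc] at hx hy
  set s := x.1 - a with hs
  set t := y.1 - a with hts
  have key : G ∣ s + t + 1 ∨ (x.1 = y.1) := by
    rcases h with ⟨h1, h2, h3⟩ | ⟨h1, h2, h3⟩ | h3
    · left
      have e : s + t + 1 = 2*u := by omega
      rw [e]; exact hd2u
    · rcases Nat.eq_zero_or_pos v with hv | hv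
      · right; omega
      · left
        have e : s + t + 1 = 2*u + 2*u + 2*v := by omega
        rw [e]; exact dvd_add (dvd_add hd2u hd2u) hd2v
    · left
      have e : s + t + 1 = 2*u + 2*v := by omega
      rw [e]; exact dvd_add hd2u hd2v
  rcases key with key | key
  · have hsum : s % G + t % G = G - 1 := by
      have hmods : s % G < G := Nat.mod_lt _ hG0
      have hmodt : t % G < G := Nat.mod_lt _ hG0
      have e : (s % G + t % G) % G = G - 1 := by
        have e1 : (s % G + t % G) % G = (s + t) % G := (Nat.add_mod s t G).symm
        have e2 : (s + t) % G = (G - 1) % G := by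
          obtain ⟨w, hw⟩ := key
          have hw1 : 1 ≤ w := by
            rcases Nat.eq_zero_or_pos w with h' | h'
            · exfalso; rw [h', mul_zero] at hw; omega
            · exact h'
          have e3 : s + t = (G - 1) + G * (w - 1) := by
            have : G * w = G * (w-1) + G := by
              conv_lhs => rw [show w = (w-1)+1 by omega]
              rw [Nat.mul_succ]
            omega
          rw [e3, Nat.add_mul_mod_self_left]
        rw [e1, e2, Nat.mod_eq_of_lt (by omega)]
      rcases Nat.lt_or_ge (s % G + t % G) G with hlt | hge
      · rw [Nat.mod_eq_of_lt hlt] at e; exact e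
      · rw [Nat.mod_eq_sub_mod hge, Nat.mod_eq_of_lt (by omega)] at e; omega
    omega
  · rw [hs, hts, key]

lemma main_count (a u v : ℕ) (hu : 1 ≤ u) :
    Nat.card (Quot (PRel a u v)) = Nat.gcd u v := by
  have hg : 0 < Nat.gcd u v := Nat.gcd_pos_of_pos_left v hu
  have hgu : Nat.gcd u v ≤ u := Nat.le_of_dvd hu (Nat.gcd_dvd_left u v)
  have key : Quot (PRel a u v) ≃ Fin (Nat.gcd u v) :=
    { toFun := Quot.lift
        (fun x => (⟨min ((x.1 - a) % (2 * Nat.gcd u v))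
            (2 * Nat.gcd u v - 1 - (x.1 - a) % (2 * Nat.gcd u v)),
          by have := Nat.mod_lt (x.1 - a) (y := 2 * Nat.gcd u v) (by omega); omega⟩ :
          Fin (Nat.gcd u v)))
        (fun x y h => Fin.ext (prel_inv a u v hu h))
      invFun := fun i => pmk a u v hu i.1 (by have := i.2; omega)
      left_inv := by
        intro q
        induction q using Quot.ind with
        | _ x =>
          have hx1 := x.2
          simp only [Set.mem_Icc] at hx1
          have h1 : Quot.mk (PRel a u v) x = pmk a u v hu (x.1 - a) (by omega) :=
            congrArg (Quot.mk (PRel a u v)) (Subtype.ext (show x.1 = a + (x.1 - a) by omega))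
          refine Eq.trans ?_ h1.symm
          exact (pmk_reduce a u v hu (x.1 - a) (by omega)).symm
      right_inv := by
        intro i
        have hi := i.2
        apply Fin.ext
        show min ((a + i.1 - a) % (2 * Nat.gcd u v))
            (2 * Nat.gcd u v - 1 - (a + i.1 - a) % (2 * Nat.gcd u v)) = i.1
        rw [Nat.add_sub_cancel_left, Nat.mod_eq_of_lt (by omega)]
        omega }
  rw [Nat.card_congr key, Nat.card_eq_fintype_card, Fintype.card_fin]

lemma orbitCount_eq (a u v : ℕ) (hu : 1 ≤ u) : orbitCount a u v = Nat.gcd u v :=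
  main_count a u v hu

/-- Let `u ≥ v ≥ 1` and consider the three decreasing pairings `f, g, h`
of widths `u, v, u + v` on an interval as above.  One step of the reduction (transmit
`g` by `h`, truncate `h`, relabel) produces three pairings of the same form with widths
`(max(v, u-v), min(v, u-v), u)` and the number of orbits is unchanged; consequently,
iterating this step computes `gcd(u,v)` via Euclid's algorithm and the number of orbits
of the interval under `{f, g, h}` is `gcd(u,v)`. -/
theorem stmt6 (a u v : ℕ) (hv : 1 ≤ v) (huv : v ≤ u) :
    orbitCount a u v = orbitCount a (max v (u - v)) (min v (u - v)) ∧
    orbitCount a u v = Nat.gcd u v := by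
  have hu : 1 ≤ u := le_trans hv huv
  have hmax : 1 ≤ max v (u - v) := le_trans hv (le_max_left _ _)
  have hgcd : Nat.gcd (max v (u - v)) (min v (u - v)) = Nat.gcd u v := by
    rcases le_total v (u - v) with h | h
    · rw [max_eq_right h, min_eq_left h, Nat.gcd_comm, Nat.gcd_sub_self_right huv,
        Nat.gcd_comm]
    · rw [max_eq_left h, min_eq_right h, Nat.gcd_sub_self_right huv, Nat.gcd_comm]
  constructor
  · rw [orbitCount_eq a u v hu, orbitCount_eq a _ _ hmax, hgcd]
  · exact orbitCount_eq a u v hu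
end

section
/- For coprime positive integers u, v, in the set {1,...,2u+2v} the equivalence relation generated by the three reflections x ~ 2u+1-x (for 1 ≤ x ≤ 2u), x ~ 4u+2v+1-x (for 2u+1 ≤ x ≤ 2u+2v), and x ~ 2u+2v+1-x (for 1 ≤ x ≤ 2u+2v) relates 1 to every other element of {1,...,2u+2v}. -/
/-!
Following the first reflection by the third sends `x ≤ 2u` to `x + 2v`, and following the
second by the third sends `x > 2u` to `x - 2u`. Together these two moves are the rotation
`x - 1 ↦ x - 1 + 2v (mod 2u + 2v)`, whose orbit through `1` is the set of all odd elements because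
`gcd (2v, 2u + 2v) = 2`. The third reflection `x ↦ 2u + 2v + 1 - x` turns even elements into odd ones.
-/

theorem Relation.EqvGen.self_iterate {α : Type*} {r : α → α → Prop} {f : α → α}
    (h : ∀ x, Relation.EqvGen r x (f x)) (x : α) : ∀ n, Relation.EqvGen r x (f^[n] x)
  | 0 => .refl x
  | n + 1 => by
    rw [Function.iterate_succ_apply']
    exact (self_iterate h x n).trans _ _ _ (h _)

namespace ThreeReflections

open Relation

def reflections (u v : ℕ) (x y : Set.Icc 1 (2 * u + 2 * v)) : Prop :=
  (1 ≤ x.1 ∧ x.1 ≤ 2 * u ∧ y.1 = 2 * u + 1 - x.1) ∨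
  (2 * u + 1 ≤ x.1 ∧ x.1 ≤ 2 * u + 2 * v ∧ y.1 = 4 * u + 2 * v + 1 - x.1) ∨
  (1 ≤ x.1 ∧ x.1 ≤ 2 * u + 2 * v ∧ y.1 = 2 * u + 2 * v + 1 - x.1)

variable {u v : ℕ}

lemma eqvGen_of_val_eq_center_sub {x y : Set.Icc 1 (2 * u + 2 * v)}
    (h : y.1 = 2 * u + 2 * v + 1 - x.1) : EqvGen (reflections u v) x y :=
  .rel _ _ (.inr (.inr ⟨x.2.1, x.2.2, h⟩))

lemma eqvGen_of_val_eq_add {x y : Set.Icc 1 (2 * u + 2 * v)}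
    (hx : x.1 ≤ 2 * u) (h : y.1 = x.1 + 2 * v) : EqvGen (reflections u v) x y := by
  have hx1 := x.2.1
  let z : Set.Icc 1 (2 * u + 2 * v) := ⟨2 * u + 1 - x.1, by constructor <;> omega⟩
  exact (EqvGen.rel x z (.inl ⟨hx1, hx, rfl⟩)).trans _ _ _
    (eqvGen_of_val_eq_center_sub (by simp only [z, h]; omega))

lemma eqvGen_of_val_add_eq {x y : Set.Icc 1 (2 * u + 2 * v)}
    (hx : 2 * u < x.1) (h : y.1 + 2 * u = x.1) : EqvGen (reflections u v) x y := by
  have hx2 := x.2.2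
  let z : Set.Icc 1 (2 * u + 2 * v) := ⟨4 * u + 2 * v + 1 - x.1, by constructor <;> omega⟩
  exact (EqvGen.rel x z (.inr (.inl ⟨hx, hx2, rfl⟩))).trans _ _ _
    (eqvGen_of_val_eq_center_sub (by simp only [z]; omega))

def rotate (x : Set.Icc 1 (2 * u + 2 * v)) : Set.Icc 1 (2 * u + 2 * v) :=
  ⟨(x.1 - 1 + 2 * v) % (2 * u + 2 * v) + 1,
    Nat.le_add_left _ _, Nat.mod_lt _ (x.2.1.trans x.2.2)⟩

lemma eqvGen_rotate (x : Set.Icc 1 (2 * u + 2 * v)) : EqvGen (reflections u v) x (rotate x) := by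
  have hx1 := x.2.1
  have hx2 := x.2.2
  rcases le_or_gt x.1 (2 * u) with hx | hx
  · refine eqvGen_of_val_eq_add hx ?_
    simp only [rotate]
    rw [Nat.mod_eq_of_lt (by omega)]
    omega
  · refine eqvGen_of_val_add_eq hx ?_
    simp only [rotate]
    rw [Nat.mod_eq_sub_mod (by omega), Nat.mod_eq_of_lt (by omega)]
    omega

lemma iterate_rotate_val (x : Set.Icc 1 (2 * u + 2 * v)) (k : ℕ) :
    (rotate^[k] x).1 = (x.1 - 1 + 2 * v * k) % (2 * u + 2 * v) + 1 := by
  induction k with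
  | zero =>
    have hx1 := x.2.1
    have hx2 := x.2.2
    rw [Nat.mul_zero, Nat.add_zero, Nat.mod_eq_of_lt (by omega), Function.iterate_zero_apply]
    omega
  | succ k ih =>
    rw [Function.iterate_succ_apply', rotate]
    simp only [ih, Nat.add_sub_cancel, Nat.mul_succ, ← Nat.add_assoc]
    rw [Nat.add_mod, Nat.mod_mod, ← Nat.add_mod]

lemma exists_iterate_rotate_eq (hcop : Nat.Coprime u v) {x y : Set.Icc 1 (2 * u + 2 * v)}
    (hx : x.1 = 1) (hy : Odd y.1) : ∃ k, rotate^[k] x = y := by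
  obtain ⟨m, hm⟩ := hy
  have hy2 := y.2.2
  have hcop' : Nat.Coprime v (u + v) := Nat.coprime_add_self_right.mpr hcop.symm
  obtain ⟨k, -, hk⟩ := Nat.exists_mul_mod_eq_of_coprime m hcop' (by omega)
  refine ⟨k, Subtype.ext ?_⟩
  rw [iterate_rotate_val, hx, hm, Nat.sub_self, Nat.zero_add, Nat.mul_assoc,
    show 2 * u + 2 * v = 2 * (u + v) by ring, Nat.mul_mod_mul_left, hk,
    Nat.mod_eq_of_lt (by omega)]

lemma eqvGen_of_odd (hcop : Nat.Coprime u v) {x y : Set.Icc 1 (2 * u + 2 * v)}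
    (hx : x.1 = 1) (hy : Odd y.1) : EqvGen (reflections u v) x y := by
  obtain ⟨k, rfl⟩ := exists_iterate_rotate_eq hcop hx hy
  exact .self_iterate eqvGen_rotate x k

lemma eqvGen_of_even (hcop : Nat.Coprime u v) {x y : Set.Icc 1 (2 * u + 2 * v)}
    (hx : x.1 = 1) (hy : Even y.1) : EqvGen (reflections u v) x y := by
  obtain ⟨m, hm⟩ := hy
  have hy1 := y.2.1
  have hy2 := y.2.2
  let z : Set.Icc 1 (2 * u + 2 * v) := ⟨2 * u + 2 * v + 1 - y.1, by constructor <;> omega⟩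
  have hz : Odd z.1 := ⟨u + v - m, by simp only [z]; omega⟩
  exact (eqvGen_of_odd hcop hx hz).trans _ _ _
    (eqvGen_of_val_eq_center_sub (by simp only [z]; omega))

end ThreeReflections

/-- For coprime positive integers `u, v`, in `{1,…,2u+2v}` the equivalence
relation generated by the three reflections `x ~ 2u+1-x` (on `[1,2u]`),
`x ~ 4u+2v+1-x` (on `[2u+1,2u+2v]`) and `x ~ 2u+2v+1-x` (on `[1,2u+2v]`) relates `1`
to every other element. -/
theorem stmt7 (u v : ℕ) (hv : 0 < v) (hcop : Nat.gcd u v = 1) :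
    ∀ x : Set.Icc 1 (2 * u + 2 * v),
      Relation.EqvGen (fun x y : Set.Icc 1 (2 * u + 2 * v) =>
        (1 ≤ x.1 ∧ x.1 ≤ 2 * u ∧ y.1 = 2 * u + 1 - x.1) ∨
        (2 * u + 1 ≤ x.1 ∧ x.1 ≤ 2 * u + 2 * v ∧ y.1 = 4 * u + 2 * v + 1 - x.1) ∨
        (1 ≤ x.1 ∧ x.1 ≤ 2 * u + 2 * v ∧ y.1 = 2 * u + 2 * v + 1 - x.1))
        ⟨1, Set.mem_Icc.mpr ⟨le_refl 1, by omega⟩⟩ x := fun x =>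
  (Nat.even_or_odd x.1).elim (ThreeReflections.eqvGen_of_even hcop rfl)
    (ThreeReflections.eqvGen_of_odd hcop rfl)
end

section
/- For any positive integers u and v, the number of orbits of {1,...,2u+2v} under the equivalence relation generated by the three reflections x ~ 2u+1-x (for 1 ≤ x ≤ 2u), x ~ 4u+2v+1-x (for 2u+1 ≤ x ≤ 2u+2v), and x ~ 2u+2v+1-x (for 1 ≤ x ≤ 2u+2v) divides both u and v. -/
namespace Stmt8

/-- `m = 2 * gcd u v`, the modulus controlling orbits. -/
def mm (u v : ℕ) : ℕ := 2 * Nat.gcd u v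

/-- the pairing involution on residues mod `mm`: `r ↦ (1 - r) mod m`. -/
def sg (u v : ℕ) (r : ℕ) : ℕ :=
  if r = 0 then 1 else if r = 1 then 0 else mm u v + 1 - r

/-- orbit invariant of a point `x`. -/
def inva (u v : ℕ) (x : ℕ) : ℕ := min (x % mm u v) (sg u v (x % mm u v))

/-- the rotation `x ↦ x + 2v (mod 2u+2v)` on `[1, 2u+2v]`. -/
def rot (u v : ℕ) (x : ℕ) : ℕ := if x ≤ 2 * u then x + 2 * v else x - 2 * u

lemma rot_apply (u v x : ℕ) : rot u v x = if x ≤ 2 * u then x + 2 * v else x - 2 * u := rfl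

section

variable {u v : ℕ}

lemma hm2 (hu : 0 < u) : 2 ≤ mm u v := by
  have : 1 ≤ Nat.gcd u v := Nat.gcd_pos_of_pos_left v hu
  unfold mm; omega

lemma mm_dvd_two_u : mm u v ∣ 2 * u := mul_dvd_mul_left 2 (Nat.gcd_dvd_left u v)

lemma mm_dvd_two_v : mm u v ∣ 2 * v := mul_dvd_mul_left 2 (Nat.gcd_dvd_right u v)

lemma mm_dvd_N : mm u v ∣ 2 * u + 2 * v := dvd_add mm_dvd_two_u mm_dvd_two_v

lemma sg_lt (r : ℕ) (hr : r < mm u v) (h2 : 2 ≤ mm u v) : sg u v r < mm u v := by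
  unfold sg; split_ifs <;> omega

lemma sg_invol (r : ℕ) (hr : r < mm u v) (h2 : 2 ≤ mm u v) : sg u v (sg u v r) = r := by
  rcases eq_or_ne r 0 with h0 | h0
  · subst h0; simp [sg]
  · rcases eq_or_ne r 1 with h1 | h1
    · subst h1; simp [sg, (by omega : ¬ (2:ℕ) ≤ 1)]
    · have e1 : sg u v r = mm u v + 1 - r := by unfold sg; rw [if_neg h0, if_neg h1]
      have e2 : sg u v (mm u v + 1 - r) = r := by
        unfold sg
        rw [if_neg (by omega), if_neg (by omega)]
        omega
      rw [e1, e2]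

lemma sg_add_modeq (r : ℕ) (hr : r < mm u v) (h2 : 2 ≤ mm u v) :
    sg u v r + r ≡ 1 [MOD mm u v] := by
  rcases eq_or_ne r 0 with h0 | h0
  · subst h0; simpa [sg] using Nat.ModEq.refl 1
  · rcases eq_or_ne r 1 with h1 | h1
    · subst h1; simpa [sg] using Nat.ModEq.refl 1
    · have e1 : sg u v r = mm u v + 1 - r := by unfold sg; rw [if_neg h0, if_neg h1]
      have e2 : sg u v r + r = mm u v + 1 := by omega
      rw [e2]
      exact ((Nat.modEq_iff_dvd' (by omega)).mpr ⟨1, by omega⟩).symm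

/-- key: if `x + y ≡ 1 (mod m)` then `y % m = sg (x % m)`. -/
lemma pair_mod {x y : ℕ} (h2 : 2 ≤ mm u v) (h : x + y ≡ 1 [MOD mm u v]) :
    y % mm u v = sg u v (x % mm u v) := by
  set m := mm u v with hmdef
  have hrm : x % m < m := Nat.mod_lt _ (by omega)
  have hsm : sg u v (x % m) < m := sg_lt _ hrm h2
  have h3 : sg u v (x % m) + x ≡ 1 [MOD m] := by
    have hstep := (Nat.ModEq.add_left (sg u v (x % m)) (Nat.mod_modEq x m))
    exact hstep.symm.trans (sg_add_modeq _ hrm h2)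
  have h4 : x + y ≡ x + sg u v (x % m) [MOD m] := by
    refine h.trans ?_
    have h3' : (1:ℕ) ≡ sg u v (x % m) + x [MOD m] := h3.symm
    simpa [Nat.add_comm] using h3'
  have h5 : y ≡ sg u v (x % m) [MOD m] := Nat.ModEq.add_left_cancel' x h4
  have h6 : y % m = sg u v (x % m) % m := h5
  rwa [Nat.mod_eq_of_lt hsm] at h6

/-- the invariant only depends on the pair `{x mod m, 1 - x mod m}`. -/
lemma inva_pair {x y : ℕ} (h2 : 2 ≤ mm u v) (h : x + y ≡ 1 [MOD mm u v]) :
    inva u v x = inva u v y := by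
  set m := mm u v with hmdef
  have hrm : x % m < m := Nat.mod_lt _ (by omega)
  have hy : y % m = sg u v (x % m) := pair_mod h2 h
  unfold inva
  rw [hy, sg_invol _ hrm h2, min_comm]

end

section Main

variable (u v : ℕ)

/-- abbreviation for the relation from the statement. -/
def R : Set.Icc 1 (2 * u + 2 * v) → Set.Icc 1 (2 * u + 2 * v) → Prop :=
  fun x y =>
      (1 ≤ x.1 ∧ x.1 ≤ 2 * u ∧ y.1 = 2 * u + 1 - x.1) ∨
      (2 * u + 1 ≤ x.1 ∧ x.1 ≤ 2 * u + 2 * v ∧ y.1 = 4 * u + 2 * v + 1 - x.1) ∨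
      (1 ≤ x.1 ∧ x.1 ≤ 2 * u + 2 * v ∧ y.1 = 2 * u + 2 * v + 1 - x.1)

variable {u v}

/-- unfolding `Quot.sound` for the relation, with plain nat statements. -/
lemma quot_step {a b : ℕ} (ha : a ∈ Set.Icc 1 (2 * u + 2 * v))
    (hb : b ∈ Set.Icc 1 (2 * u + 2 * v))
    (h : (1 ≤ a ∧ a ≤ 2 * u ∧ b = 2 * u + 1 - a) ∨
      (2 * u + 1 ≤ a ∧ a ≤ 2 * u + 2 * v ∧ b = 4 * u + 2 * v + 1 - a) ∨
      (1 ≤ a ∧ a ≤ 2 * u + 2 * v ∧ b = 2 * u + 2 * v + 1 - a)) :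
    Quot.mk (R u v) ⟨a, ha⟩ = Quot.mk (R u v) ⟨b, hb⟩ :=
  Quot.sound h

variable (u v)

/-- connectedness in the quotient, as a relation on ℕ. -/
def Conn (x y : ℕ) : Prop :=
  ∀ (hx : x ∈ Set.Icc 1 (2 * u + 2 * v)) (hy : y ∈ Set.Icc 1 (2 * u + 2 * v)),
    Quot.mk (R u v) ⟨x, hx⟩ = Quot.mk (R u v) ⟨y, hy⟩

variable {u v}

lemma conn_trans {x y z : ℕ} (hy : y ∈ Set.Icc 1 (2 * u + 2 * v))
    (h1 : Conn u v x y) (h2 : Conn u v y z) : Conn u v x z :=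
  fun hx hz => (h1 hx hy).trans (h2 hy hz)

lemma rot_mem {x : ℕ} (hx1 : 1 ≤ x) (hx2 : x ≤ 2 * u + 2 * v) (hv : 0 < v) :
    1 ≤ rot u v x ∧ rot u v x ≤ 2 * u + 2 * v := by
  unfold rot; split_ifs <;> omega

lemma conn_rot {x : ℕ} (hx1 : 1 ≤ x) (hx2 : x ≤ 2 * u + 2 * v) (hv : 0 < v) :
    Conn u v x (rot u v x) := by
  intro hx hy
  by_cases hc : x ≤ 2 * u
  · have hmem : 2 * u + 1 - x ∈ Set.Icc 1 (2 * u + 2 * v) :=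
      Set.mem_Icc.mpr ⟨by omega, by omega⟩
    have hrx : rot u v x = x + 2 * v := by unfold rot; rw [if_pos hc]
    refine (quot_step hx hmem (Or.inl ⟨hx1, hc, rfl⟩)).trans
      (quot_step hmem hy (Or.inr (Or.inr ⟨by omega, by omega, by omega⟩)))
  · have hmem : 4 * u + 2 * v + 1 - x ∈ Set.Icc 1 (2 * u + 2 * v) :=
      Set.mem_Icc.mpr ⟨by omega, by omega⟩
    have hrx : rot u v x = x - 2 * u := by unfold rot; rw [if_neg hc]
    refine (quot_step hx hmem (Or.inr (Or.inl ⟨by omega, hx2, rfl⟩))).trans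
      (quot_step hmem hy (Or.inr (Or.inr ⟨by omega, by omega, by omega⟩)))

lemma rot_iter_mem {x : ℕ} (hx1 : 1 ≤ x) (hx2 : x ≤ 2 * u + 2 * v) (hv : 0 < v) :
    ∀ k, 1 ≤ (rot u v)^[k] x ∧ (rot u v)^[k] x ≤ 2 * u + 2 * v := by
  intro k
  induction k with
  | zero => exact ⟨hx1, hx2⟩
  | succ n ih =>
    rw [Function.iterate_succ_apply']
    exact rot_mem ih.1 ih.2 hv

lemma conn_rot_iter {x : ℕ} (hx1 : 1 ≤ x) (hx2 : x ≤ 2 * u + 2 * v) (hv : 0 < v) :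
    ∀ k, Conn u v x ((rot u v)^[k] x) := by
  intro k
  induction k with
  | zero => exact fun hx hy => by congr
  | succ n ih =>
    have hm := rot_iter_mem hx1 hx2 hv n
    have step := conn_rot hm.1 hm.2 hv
    rw [Function.iterate_succ_apply']
    exact conn_trans (Set.mem_Icc.mpr hm) ih step

lemma rot_iter_eq {x : ℕ} (hx1 : 1 ≤ x) (hx2 : x ≤ 2 * u + 2 * v) (hv : 0 < v) :
    ∀ k, ∃ c : ℕ, x + 2 * v * k = (rot u v)^[k] x + c * (2 * u + 2 * v) := by
  intro k
  induction k with
  | zero => exact ⟨0, by simp⟩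
  | succ n ih =>
    obtain ⟨c, hc⟩ := ih
    have hm := rot_iter_mem hx1 hx2 hv n
    rw [Function.iterate_succ_apply']
    have e1 : 2 * v * (n + 1) = 2 * v * n + 2 * v := by ring
    by_cases hc2 : (rot u v)^[n] x ≤ 2 * u
    · refine ⟨c, ?_⟩
      rw [rot_apply, if_pos hc2]; omega
    · refine ⟨c + 1, ?_⟩
      have e2 : (c + 1) * (2 * u + 2 * v) = c * (2 * u + 2 * v) + (2 * u + 2 * v) := by ring
      rw [rot_apply, if_neg hc2]; omega

lemma gcd_2v_N : Nat.gcd (2 * v) (2 * u + 2 * v) = mm u v := by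
  have h1 : 2 * u + 2 * v = 2 * (u + v) := by ring
  rw [h1, Nat.gcd_mul_left]
  unfold mm
  congr 1
  rw [Nat.gcd_comm u v]
  exact Nat.gcd_add_self_right v u

/-- two elements of `[1, N]` that agree mod `N` are equal. -/
lemma mod_inj {a b N : ℕ} (hN : 0 < N) (ha1 : 1 ≤ a) (ha2 : a ≤ N) (hb1 : 1 ≤ b)
    (hb2 : b ≤ N) (h : a % N = b % N) : a = b := by
  rcases Nat.lt_or_ge a N with ha | ha
  · rcases Nat.lt_or_ge b N with hb | hb
    · rwa [Nat.mod_eq_of_lt ha, Nat.mod_eq_of_lt hb] at h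
    · have hb' : b = N := by omega
      rw [Nat.mod_eq_of_lt ha, hb', Nat.mod_self] at h
      omega
  · have ha' : a = N := by omega
    rcases Nat.lt_or_ge b N with hb | hb
    · rw [ha', Nat.mod_self, Nat.mod_eq_of_lt hb] at h
      omega
    · omega

/-- reachability by rotations within a residue class mod `m`. -/
lemma reach (hu : 0 < u) (hv : 0 < v) {x y : ℕ} (hx1 : 1 ≤ x) (hx2 : x ≤ 2 * u + 2 * v)
    (hy1 : 1 ≤ y) (hy2 : y ≤ 2 * u + 2 * v) (h : x % mm u v = y % mm u v) :
    ∃ k : ℕ, (rot u v)^[k] x = y := by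
  set N := 2 * u + 2 * v with hNdef
  have hN : 0 < N := by omega
  -- Bezout
  have hbez : (mm u v : ℤ) = 2 * v * Nat.gcdA (2 * v) N + N * Nat.gcdB (2 * v) N := by
    have := Nat.gcd_eq_gcd_ab (2 * v) N
    rw [gcd_2v_N] at this
    exact_mod_cast this
  set A : ℤ := Nat.gcdA (2 * v) N
  set B : ℤ := Nat.gcdB (2 * v) N
  have hmodeq : x ≡ y [MOD mm u v] := h
  obtain ⟨e, he⟩ : (mm u v : ℤ) ∣ (y : ℤ) - x := hmodeq.dvd
  set k : ℕ := ((A * e) % (N : ℤ)).toNat with hkdef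
  have hNz : (N : ℤ) ≠ 0 := by positivity
  have hkk : (k : ℤ) = (A * e) % N := Int.toNat_of_nonneg (Int.emod_nonneg _ hNz)
  have hk1 : (k : ℤ) ≡ A * e [ZMOD (N : ℤ)] := by
    rw [hkk]
    exact Int.emod_emod_of_dvd (A * e) dvd_rfl
  have hk2 : (2 * v : ℤ) * k ≡ (y : ℤ) - x [ZMOD (N : ℤ)] := by
    have h1 : (2 * v : ℤ) * k ≡ (2 * v : ℤ) * (A * e) [ZMOD (N : ℤ)] :=
      hk1.mul_left _
    have h2 : (2 * v : ℤ) * (A * e) ≡ (mm u v : ℤ) * e [ZMOD (N : ℤ)] := by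
      rw [Int.ModEq]
      have : (mm u v : ℤ) * e - (2 * v : ℤ) * (A * e) = (N : ℤ) * (B * e) := by
        rw [hbez]; ring
      refine (Int.modEq_iff_dvd.mpr ⟨B * e, this⟩)
    rw [he]
    exact h1.trans h2
  obtain ⟨c, hc⟩ := rot_iter_eq hx1 hx2 hv k
  set r : ℕ := (rot u v)^[k] x with hrdef
  have hrmem := rot_iter_mem hx1 hx2 hv k
  have hr : (r : ℤ) ≡ (x : ℤ) + 2 * v * k [ZMOD (N : ℤ)] := by
    refine Int.modEq_iff_dvd.mpr ⟨c, ?_⟩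
    have hcz : (x : ℤ) + 2 * v * k = (r : ℤ) + c * N := by exact_mod_cast hc
    rw [hcz]; ring
  have hry : (r : ℤ) ≡ (y : ℤ) [ZMOD (N : ℤ)] := by
    refine hr.trans ?_
    have : (x : ℤ) + ((y : ℤ) - x) = y := by ring
    calc (x : ℤ) + 2 * v * k ≡ (x : ℤ) + ((y : ℤ) - x) [ZMOD (N : ℤ)] := hk2.add_left _
    _ = y := this
  have hnat : r ≡ y [MOD N] := by
    rw [Nat.modEq_iff_dvd]
    exact Int.ModEq.dvd hry
  exact ⟨k, mod_inj hN hrmem.1 hrmem.2 hy1 hy2 hnat⟩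

/-- main connectivity: equal invariants implies same orbit. -/
lemma conn_of_inva (hu : 0 < u) (hv : 0 < v) {x y : ℕ}
    (hx1 : 1 ≤ x) (hx2 : x ≤ 2 * u + 2 * v) (hy1 : 1 ≤ y) (hy2 : y ≤ 2 * u + 2 * v)
    (h : inva u v x = inva u v y) : Conn u v x y := by
  have h2 : 2 ≤ mm u v := hm2 hu
  have hrx : x % mm u v < mm u v := Nat.mod_lt _ (by omega)
  have hry : y % mm u v < mm u v := Nat.mod_lt _ (by omega)
  have hd : x % mm u v = y % mm u v ∨ x % mm u v = sg u v (y % mm u v) := by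
    unfold inva at h
    rcases min_cases (x % mm u v) (sg u v (x % mm u v)) with ⟨e1, -⟩ | ⟨e1, -⟩ <;>
      rcases min_cases (y % mm u v) (sg u v (y % mm u v)) with ⟨e2, -⟩ | ⟨e2, -⟩ <;>
      rw [e1, e2] at h
    · exact Or.inl h
    · exact Or.inr h
    · refine Or.inr ?_
      rw [← h, sg_invol _ hrx h2]
    · left
      have := congrArg (sg u v) h
      rwa [sg_invol _ hrx h2, sg_invol _ hry h2] at this
  rcases hd with hd | hd
  · obtain ⟨k, hk⟩ := reach hu hv hx1 hx2 hy1 hy2 hd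
    have hcon := conn_rot_iter hx1 hx2 hv k
    rwa [hk] at hcon
  · set y' : ℕ := 2 * u + 2 * v + 1 - y with hy'def
    have hy'1 : 1 ≤ y' := by omega
    have hy'2 : y' ≤ 2 * u + 2 * v := by omega
    have hsum : y + y' = 2 * u + 2 * v + 1 := by omega
    have hmod : y + y' ≡ 1 [MOD mm u v] := by
      rw [hsum]
      refine ((Nat.modEq_iff_dvd' (by omega)).mpr ?_).symm
      simpa using (mm_dvd_N (u := u) (v := v))
    have hy' : y' % mm u v = sg u v (y % mm u v) := pair_mod h2 hmod
    obtain ⟨k, hk⟩ := reach hu hv hx1 hx2 hy'1 hy'2 (by rw [hd, ← hy'])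
    have hcon := conn_rot_iter hx1 hx2 hv k
    rw [hk] at hcon
    intro hx hy
    have hmem' : y' ∈ Set.Icc 1 (2 * u + 2 * v) := Set.mem_Icc.mpr ⟨hy'1, hy'2⟩
    exact (hcon hx hmem').trans
      (quot_step hy hmem' (Or.inr (Or.inr ⟨hy1, hy2, rfl⟩))).symm

end Main

section Count

/-- canonical representative of the orbit with invariant encoded by `i`. -/
def rep (u v : ℕ) (i : ℕ) : ℕ := if i = 0 then mm u v else i + 1

/-- encoding the invariant values `{0} ∪ [2, g]` into `[0, g)`. -/
def enc (c : ℕ) : ℕ := if c = 0 then 0 else c - 1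

variable {u v : ℕ}

lemma inva_le (hu : 0 < u) (x : ℕ) :
    inva u v x ≤ Nat.gcd u v ∧ inva u v x ≠ 1 := by
  have h2 : 2 ≤ mm u v := hm2 hu
  have hmg : mm u v = 2 * Nat.gcd u v := rfl
  have hr : x % mm u v < mm u v := Nat.mod_lt _ (by omega)
  set r := x % mm u v with hrdef
  have key : (r = 0 ∧ sg u v r = 1) ∨ (r = 1 ∧ sg u v r = 0) ∨
      (2 ≤ r ∧ sg u v r = mm u v + 1 - r) := by
    unfold sg; split_ifs <;> omega
  have e0 : inva u v x = min r (sg u v r) := rfl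
  have e1 := min_le_left r (sg u v r)
  have e2 := min_le_right r (sg u v r)
  have e3 := min_choice r (sg u v r)
  omega

lemma enc_lt (hu : 0 < u) (x : ℕ) : enc (inva u v x) < Nat.gcd u v := by
  have hg1 : 0 < Nat.gcd u v := Nat.gcd_pos_of_pos_left v hu
  have := inva_le (v := v) hu x
  unfold enc; split_ifs <;> omega

lemma rep_mem (hu : 0 < u) (hv : 0 < v) {i : ℕ} (hi : i < Nat.gcd u v) :
    1 ≤ rep u v i ∧ rep u v i ≤ 2 * u + 2 * v := by
  have h2 : 2 ≤ mm u v := hm2 hu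
  have hmN : mm u v ≤ 2 * u + 2 * v := Nat.le_of_dvd (by omega) mm_dvd_N
  have hmg : mm u v = 2 * Nat.gcd u v := rfl
  unfold rep; split_ifs <;> omega

lemma inva_rep (hu : 0 < u) {i : ℕ} (hi : i < Nat.gcd u v) :
    inva u v (rep u v i) = if i = 0 then 0 else i + 1 := by
  have h2 : 2 ≤ mm u v := hm2 hu
  have hmg : mm u v = 2 * Nat.gcd u v := rfl
  by_cases h0 : i = 0
  · subst h0
    have hrep : rep u v 0 = mm u v := rfl
    rw [hrep, if_pos rfl]
    unfold inva
    rw [Nat.mod_self]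
    simp [sg]
  · have hrep : rep u v i = i + 1 := by unfold rep; rw [if_neg h0]
    have hlt : i + 1 < mm u v := by omega
    have hmod : (i + 1) % mm u v = i + 1 := Nat.mod_eq_of_lt hlt
    have hsg : sg u v (i + 1) = mm u v + 1 - (i + 1) := by
      unfold sg; rw [if_neg (by omega), if_neg (by omega)]
    rw [if_neg h0, hrep]
    unfold inva
    rw [hmod, hsg]
    have : i + 1 ≤ mm u v + 1 - (i + 1) := by omega
    exact min_eq_left this

lemma inva_rep_enc (hu : 0 < u) (x : ℕ) :
    inva u v (rep u v (enc (inva u v x))) = inva u v x := by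
  have hle := inva_le (v := v) hu x
  have hlt := enc_lt (v := v) hu x
  rw [inva_rep hu hlt]
  unfold enc
  split_ifs with h0 h1 h2 <;> omega

lemma inva_R (hu : 0 < u) (hv : 0 < v) {a b : Set.Icc 1 (2 * u + 2 * v)}
    (h : R u v a b) : inva u v a.1 = inva u v b.1 := by
  have h2 : 2 ≤ mm u v := hm2 hu
  rcases h with ⟨h1, hA, hB⟩ | ⟨h1, hA, hB⟩ | ⟨h1, hA, hB⟩
  · refine inva_pair h2 ?_
    have hsum : a.1 + b.1 = 2 * u + 1 := by omega
    rw [hsum]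
    refine ((Nat.modEq_iff_dvd' (by omega)).mpr ?_).symm
    simpa using (mm_dvd_two_u (u := u) (v := v))
  · refine inva_pair h2 ?_
    have hsum : a.1 + b.1 = 4 * u + 2 * v + 1 := by omega
    rw [hsum]
    refine ((Nat.modEq_iff_dvd' (by omega)).mpr ?_).symm
    have : mm u v ∣ 4 * u + 2 * v := by
      have ha := mm_dvd_two_u (u := u) (v := v)
      have hb := mm_dvd_N (u := u) (v := v)
      have : 4 * u + 2 * v = 2 * u + (2 * u + 2 * v) := by ring
      rw [this]
      exact dvd_add ha hb
    simpa using this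
  · refine inva_pair h2 ?_
    have hsum : a.1 + b.1 = 2 * u + 2 * v + 1 := by omega
    rw [hsum]
    refine ((Nat.modEq_iff_dvd' (by omega)).mpr ?_).symm
    simpa using (mm_dvd_N (u := u) (v := v))

/-- the number of orbits equals `gcd u v`. -/
lemma card_eq (u v : ℕ) (hu : 0 < u) (hv : 0 < v) :
    Nat.card (Quot (R u v)) = Nat.gcd u v := by
  set g := Nat.gcd u v with hgdef
  have hg1 : 0 < g := Nat.gcd_pos_of_pos_left v hu
  have wd : ∀ a b : Set.Icc 1 (2 * u + 2 * v), R u v a b →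
      (⟨enc (inva u v a.1), enc_lt hu a.1⟩ : Fin g) = ⟨enc (inva u v b.1), enc_lt hu b.1⟩ := by
    intro a b h
    exact Fin.ext (congrArg enc (inva_R hu hv h))
  have e : Quot (R u v) ≃ Fin g := by
    refine ⟨Quot.lift (fun x => (⟨enc (inva u v x.1), enc_lt hu x.1⟩ : Fin g)) wd,
      fun i => Quot.mk _ ⟨rep u v i.1, Set.mem_Icc.mpr (rep_mem hu hv i.2)⟩, ?_, ?_⟩
    · refine Quot.ind ?_
      intro x
      have hx := Set.mem_Icc.mp x.2
      have hrm := rep_mem hu hv (enc_lt hu x.1)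
      have hcon := conn_of_inva hu hv hrm.1 hrm.2 hx.1 hx.2 (inva_rep_enc hu x.1)
      exact hcon (Set.mem_Icc.mpr hrm) x.2
    · intro i
      refine Fin.ext ?_
      show enc (inva u v (rep u v i.1)) = i.1
      by_cases h0 : i.1 = 0
      · rw [inva_rep hu i.2, if_pos h0]
        simp [enc, h0]
      · rw [inva_rep hu i.2, if_neg h0]
        unfold enc
        rw [if_neg (by omega)]
        omega
  rw [Nat.card_congr e, Nat.card_eq_fintype_card, Fintype.card_fin]

end Count

end Stmt8


/-- For any positive integers `u, v`, the number of orbits of `{1,…,2u+2v}`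
under the equivalence relation generated by the three reflections `x ~ 2u+1-x`
(on `[1,2u]`), `x ~ 4u+2v+1-x` (on `[2u+1,2u+2v]`) and `x ~ 2u+2v+1-x`
(on `[1,2u+2v]`) divides both `u` and `v`. -/
theorem stmt8 (u v : ℕ) (hu : 0 < u) (hv : 0 < v) :
    Nat.card (Quot (fun x y : Set.Icc 1 (2 * u + 2 * v) =>
      (1 ≤ x.1 ∧ x.1 ≤ 2 * u ∧ y.1 = 2 * u + 1 - x.1) ∨
      (2 * u + 1 ≤ x.1 ∧ x.1 ≤ 2 * u + 2 * v ∧ y.1 = 4 * u + 2 * v + 1 - x.1) ∨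
      (1 ≤ x.1 ∧ x.1 ≤ 2 * u + 2 * v ∧ y.1 = 2 * u + 2 * v + 1 - x.1))) ∣ u ∧
    Nat.card (Quot (fun x y : Set.Icc 1 (2 * u + 2 * v) =>
      (1 ≤ x.1 ∧ x.1 ≤ 2 * u ∧ y.1 = 2 * u + 1 - x.1) ∨
      (2 * u + 1 ≤ x.1 ∧ x.1 ≤ 2 * u + 2 * v ∧ y.1 = 4 * u + 2 * v + 1 - x.1) ∨
      (1 ≤ x.1 ∧ x.1 ≤ 2 * u + 2 * v ∧ y.1 = 2 * u + 2 * v + 1 - x.1))) ∣ v := by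
  have h1 : Nat.card (Quot (fun x y : Set.Icc 1 (2 * u + 2 * v) =>
      (1 ≤ x.1 ∧ x.1 ≤ 2 * u ∧ y.1 = 2 * u + 1 - x.1) ∨
      (2 * u + 1 ≤ x.1 ∧ x.1 ≤ 2 * u + 2 * v ∧ y.1 = 4 * u + 2 * v + 1 - x.1) ∨
      (1 ≤ x.1 ∧ x.1 ≤ 2 * u + 2 * v ∧ y.1 = 2 * u + 2 * v + 1 - x.1))) = Nat.gcd u v :=
    Stmt8.card_eq u v hu hv
  rw [h1]
  exact ⟨Nat.gcd_dvd_left u v, Nat.gcd_dvd_right u v⟩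
end

section
/- For positive integers u ≥ v, the orbit count of the equivalence relation on {1, ..., 2u+2v} generated by the reflections r₁(x) = 2u+1-x on [1,2u], r₂(x) = 4u+2v+1-x on [2u+1,2u+2v], and r₃(x) = 2u+2v+1-x on [1,2u+2v] equals the orbit count of the equivalence relation on {1,...,2u} generated by the reflections t₁, t₂, t₃, where t₁ is either t₁(x) = 2(u-v)+1-x on [1, 2(u-v)] or t₁(x) = 2v+1-x on [1,2v], whichever of these intervals is smaller (placed first), t₂ is the reflection of the complementary interval in [1,2u], and t₃(x) = 2u+1-x on [1,2u]. -/
namespace Stmt15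

/-- The relation on the big interval. -/
def R (u v : ℕ) (x y : Set.Icc 1 (2 * u + 2 * v)) : Prop :=
  (1 ≤ x.1 ∧ x.1 ≤ 2 * u ∧ y.1 = 2 * u + 1 - x.1) ∨
  (2 * u + 1 ≤ x.1 ∧ x.1 ≤ 2 * u + 2 * v ∧ y.1 = 4 * u + 2 * v + 1 - x.1) ∨
  (1 ≤ x.1 ∧ x.1 ≤ 2 * u + 2 * v ∧ y.1 = 2 * u + 2 * v + 1 - x.1)

/-- The relation on the small interval with split point `2a`. -/
def S (u a : ℕ) (x y : Set.Icc 1 (2 * u)) : Prop :=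
  (1 ≤ x.1 ∧ x.1 ≤ 2 * a ∧ y.1 = 2 * a + 1 - x.1) ∨
  (2 * a + 1 ≤ x.1 ∧ x.1 ≤ 2 * u ∧ y.1 = 2 * u + 2 * a + 1 - x.1) ∨
  (1 ≤ x.1 ∧ x.1 ≤ 2 * u ∧ y.1 = 2 * u + 1 - x.1)

lemma mk_congr {n : ℕ} (r : Set.Icc 1 n → Set.Icc 1 n → Prop) {x z : ℕ}
    (hx : x ∈ Set.Icc 1 n) (hz : z ∈ Set.Icc 1 n) (h : x = z) :
    Quot.mk r ⟨x, hx⟩ = Quot.mk r ⟨z, hz⟩ := by subst h; rfl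

lemma R.mk1 {u v x z : ℕ} (hx : x ∈ Set.Icc 1 (2*u+2*v)) (hz : z ∈ Set.Icc 1 (2*u+2*v))
    (h1 : 1 ≤ x) (h2 : x ≤ 2*u) (h3 : z = 2*u+1-x) :
    Quot.mk (R u v) ⟨x, hx⟩ = Quot.mk (R u v) ⟨z, hz⟩ :=
  Quot.sound (Or.inl ⟨h1, h2, h3⟩)

lemma R.mk2 {u v x z : ℕ} (hx : x ∈ Set.Icc 1 (2*u+2*v)) (hz : z ∈ Set.Icc 1 (2*u+2*v))
    (h1 : 2*u+1 ≤ x) (h2 : x ≤ 2*u+2*v) (h3 : z = 4*u+2*v+1-x) :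
    Quot.mk (R u v) ⟨x, hx⟩ = Quot.mk (R u v) ⟨z, hz⟩ :=
  Quot.sound (Or.inr (Or.inl ⟨h1, h2, h3⟩))

lemma R.mk3 {u v x z : ℕ} (hx : x ∈ Set.Icc 1 (2*u+2*v)) (hz : z ∈ Set.Icc 1 (2*u+2*v))
    (h1 : 1 ≤ x) (h2 : x ≤ 2*u+2*v) (h3 : z = 2*u+2*v+1-x) :
    Quot.mk (R u v) ⟨x, hx⟩ = Quot.mk (R u v) ⟨z, hz⟩ :=
  Quot.sound (Or.inr (Or.inr ⟨h1, h2, h3⟩))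

lemma S.mk1 {u a x z : ℕ} (hx : x ∈ Set.Icc 1 (2*u)) (hz : z ∈ Set.Icc 1 (2*u))
    (h1 : 1 ≤ x) (h2 : x ≤ 2*a) (h3 : z = 2*a+1-x) :
    Quot.mk (S u a) ⟨x, hx⟩ = Quot.mk (S u a) ⟨z, hz⟩ :=
  Quot.sound (Or.inl ⟨h1, h2, h3⟩)

lemma S.mk2 {u a x z : ℕ} (hx : x ∈ Set.Icc 1 (2*u)) (hz : z ∈ Set.Icc 1 (2*u))
    (h1 : 2*a+1 ≤ x) (h2 : x ≤ 2*u) (h3 : z = 2*u+2*a+1-x) :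
    Quot.mk (S u a) ⟨x, hx⟩ = Quot.mk (S u a) ⟨z, hz⟩ :=
  Quot.sound (Or.inr (Or.inl ⟨h1, h2, h3⟩))

lemma S.mk3 {u a x z : ℕ} (hx : x ∈ Set.Icc 1 (2*u)) (hz : z ∈ Set.Icc 1 (2*u))
    (h1 : 1 ≤ x) (h2 : x ≤ 2*u) (h3 : z = 2*u+1-x) :
    Quot.mk (S u a) ⟨x, hx⟩ = Quot.mk (S u a) ⟨z, hz⟩ :=
  Quot.sound (Or.inr (Or.inr ⟨h1, h2, h3⟩))

/-- Quotients are equivalent given mutually descending maps inverse up to the relations. -/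
def quotEquiv {α β : Sort*} {r : α → α → Prop} {s : β → β → Prop}
    (f : α → β) (g : β → α)
    (hf : ∀ x y, r x y → Quot.mk s (f x) = Quot.mk s (f y))
    (hg : ∀ x y, s x y → Quot.mk r (g x) = Quot.mk r (g y))
    (hgf : ∀ x, Quot.mk r (g (f x)) = Quot.mk r x)
    (hfg : ∀ y, Quot.mk s (f (g y)) = Quot.mk s y) : Quot r ≃ Quot s where
  toFun := Quot.lift (fun x => Quot.mk s (f x)) hf
  invFun := Quot.lift (fun y => Quot.mk r (g y)) hg
  left_inv := by intro q; induction q using Quot.ind with | _ x => exact hgf x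
  right_inv := by intro q; induction q using Quot.ind with | _ y => exact hfg y

/-- Conjugation by the full reflection: each generator of `S u a` holds in the
orbit relation of `S u (u-a)`. -/
lemma S_step (u a : ℕ) (ha : a ≤ u) :
    ∀ x y, S u a x y → Quot.mk (S u (u - a)) x = Quot.mk (S u (u - a)) y := by
  intro x y h
  obtain ⟨hx1, hx2⟩ := Set.mem_Icc.1 x.2
  obtain ⟨hy1, hy2⟩ := Set.mem_Icc.1 y.2
  rcases h with ⟨h1, h2, h3⟩ | ⟨h1, h2, h3⟩ | ⟨h1, h2, h3⟩
  · -- x ∈ [1,2a], y = 2a+1-x : chain x ~ 2u+1-x ~ 2(u-a)+x ~ 2a+1-x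
    have m1 : 2*u+1-x.1 ∈ Set.Icc 1 (2*u) := Set.mem_Icc.2 (by omega)
    have m2 : 2*(u-a)+x.1 ∈ Set.Icc 1 (2*u) := Set.mem_Icc.2 (by omega)
    calc Quot.mk (S u (u-a)) x
        = Quot.mk (S u (u-a)) ⟨2*u+1-x.1, m1⟩ := S.mk3 x.2 m1 (by omega) (by omega) (by omega)
      _ = Quot.mk (S u (u-a)) ⟨2*(u-a)+x.1, m2⟩ := S.mk2 m1 m2 (by omega) (by omega) (by omega)
      _ = Quot.mk (S u (u-a)) y := S.mk3 m2 y.2 (by omega) (by omega) (by omega)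
  · -- x ∈ [2a+1,2u], y = 2u+2a+1-x : chain x ~ 2u+1-x ~ x-2a ~ 2u+2a+1-x
    have m1 : 2*u+1-x.1 ∈ Set.Icc 1 (2*u) := Set.mem_Icc.2 (by omega)
    have m2 : x.1-2*a ∈ Set.Icc 1 (2*u) := Set.mem_Icc.2 (by omega)
    calc Quot.mk (S u (u-a)) x
        = Quot.mk (S u (u-a)) ⟨2*u+1-x.1, m1⟩ := S.mk3 x.2 m1 (by omega) (by omega) (by omega)
      _ = Quot.mk (S u (u-a)) ⟨x.1-2*a, m2⟩ := S.mk1 m1 m2 (by omega) (by omega) (by omega)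
      _ = Quot.mk (S u (u-a)) y := S.mk3 m2 y.2 (by omega) (by omega) (by omega)
  · exact S.mk3 x.2 y.2 h1 h2 h3

/-- The orbit quotients of `S u a` and `S u (u-a)` agree. -/
def S_equiv (u a : ℕ) (ha : a ≤ u) : Quot (S u a) ≃ Quot (S u (u - a)) := by
  refine quotEquiv id id (S_step u a ha) ?_ (fun _ => rfl) (fun _ => rfl)
  have h := S_step u (u - a) (Nat.sub_le u a)
  rwa [Nat.sub_sub_self ha] at h

/-- Folding map from the big interval to the small one. -/
def fold (u v : ℕ) (huv : v ≤ u) (x : Set.Icc 1 (2*u+2*v)) : Set.Icc 1 (2*u) :=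
  if h : x.1 ≤ 2*u then ⟨x.1, Set.mem_Icc.2 ⟨(Set.mem_Icc.1 x.2).1, h⟩⟩
  else ⟨2*u+2*v+1-x.1, Set.mem_Icc.2 (by
    have := Set.mem_Icc.1 x.2; omega)⟩

/-- Inclusion of the small interval into the big one. -/
def incl (u v : ℕ) (y : Set.Icc 1 (2*u)) : Set.Icc 1 (2*u+2*v) :=
  ⟨y.1, Set.mem_Icc.2 (by have := Set.mem_Icc.1 y.2; omega)⟩

/-- Folding the big interval: `Quot (R u v) ≃ Quot (S u v)`. -/
def fold_equiv (u v : ℕ) (huv : v ≤ u) : Quot (R u v) ≃ Quot (S u v) := by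
  refine quotEquiv (fold u v huv) (incl u v) ?_ ?_ ?_ ?_
  · intro x y h
    obtain ⟨hx1, hx2⟩ := Set.mem_Icc.1 x.2
    obtain ⟨hy1, hy2⟩ := Set.mem_Icc.1 y.2
    rcases h with ⟨h1, h2, h3⟩ | ⟨h1, h2, h3⟩ | ⟨h1, h2, h3⟩ <;> simp only [fold]
    · rw [dif_pos h2, dif_pos (show y.1 ≤ 2*u by omega)]
      exact S.mk3 _ _ h1 h2 h3
    · rw [dif_neg (show ¬ x.1 ≤ 2*u by omega), dif_neg (show ¬ y.1 ≤ 2*u by omega)]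
      exact S.mk1 _ _ (by omega) (by omega) (by omega)
    · by_cases hxu : x.1 ≤ 2*u
      · by_cases hyu : y.1 ≤ 2*u
        · rw [dif_pos hxu, dif_pos hyu]
          exact S.mk2 _ _ (by omega) (by omega) (by omega)
        · rw [dif_pos hxu, dif_neg hyu]
          exact mk_congr _ _ _ (by omega)
      · rw [dif_neg hxu, dif_pos (show y.1 ≤ 2*u by omega)]
        exact mk_congr _ _ _ (by omega)
  · intro x y h
    obtain ⟨hx1, hx2⟩ := Set.mem_Icc.1 x.2
    obtain ⟨hy1, hy2⟩ := Set.mem_Icc.1 y.2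
    rcases h with ⟨h1, h2, h3⟩ | ⟨h1, h2, h3⟩ | ⟨h1, h2, h3⟩ <;> simp only [incl]
    · -- x ∈ [1,2v], y = 2v+1-x : chain x ~ 2u+2v+1-x ~ 2u+x ~ 2v+1-x
      have m1 : 2*u+2*v+1-x.1 ∈ Set.Icc 1 (2*u+2*v) := Set.mem_Icc.2 (by omega)
      have m2 : 2*u+x.1 ∈ Set.Icc 1 (2*u+2*v) := Set.mem_Icc.2 (by omega)
      have m0 : x.1 ∈ Set.Icc 1 (2*u+2*v) := Set.mem_Icc.2 (by omega)
      have m3 : y.1 ∈ Set.Icc 1 (2*u+2*v) := Set.mem_Icc.2 (by omega)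
      calc Quot.mk (R u v) ⟨x.1, m0⟩
          = Quot.mk (R u v) ⟨2*u+2*v+1-x.1, m1⟩ := R.mk3 _ _ (by omega) (by omega) (by omega)
        _ = Quot.mk (R u v) ⟨2*u+x.1, m2⟩ := R.mk2 _ _ (by omega) (by omega) (by omega)
        _ = Quot.mk (R u v) ⟨y.1, m3⟩ := R.mk3 _ _ (by omega) (by omega) (by omega)
    · exact R.mk3 _ _ (by omega) (by omega) (by omega)
    · exact R.mk1 _ _ (by omega) (by omega) (by omega)
  · intro x
    obtain ⟨hx1, hx2⟩ := Set.mem_Icc.1 x.2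
    by_cases hxu : x.1 ≤ 2*u
    · have e : incl u v (fold u v huv x) = x :=
        Subtype.ext (by simp only [fold, incl]; rw [dif_pos hxu])
      rw [e]
    · have m : 2*u+2*v+1-x.1 ∈ Set.Icc 1 (2*u+2*v) := Set.mem_Icc.2 (by omega)
      have e : incl u v (fold u v huv x) = ⟨2*u+2*v+1-x.1, m⟩ :=
        Subtype.ext (by simp only [fold, incl]; rw [dif_neg hxu])
      rw [e]
      exact (R.mk3 x.2 m (by omega) (by omega) (by omega)).symm
  · intro y
    obtain ⟨hy1, hy2⟩ := Set.mem_Icc.1 y.2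
    have e : fold u v huv (incl u v y) = y :=
      Subtype.ext (by unfold fold; split; rfl; exact absurd hy2 ‹_›)
    rw [e]

end Stmt15

/-- One step of the orbit-preserving reduction.  For positive integers
`u ≥ v`, the orbit count of `{1,…,2u+2v}` under the reflections `r₁(x) = 2u+1-x` on
`[1,2u]`, `r₂(x) = 4u+2v+1-x` on `[2u+1,2u+2v]`, and `r₃(x) = 2u+2v+1-x` on
`[1,2u+2v]` equals the orbit count of `{1,…,2u}` under the reflections
`t₁(x) = 2m+1-x` on `[1,2m]` where `m = min(v, u-v)` (the smaller of the two new
widths, placed first), `t₂(x) = 2u+2m+1-x` reflecting the complementary interval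
`[2m+1,2u]`, and `t₃(x) = 2u+1-x` on `[1,2u]`. -/
theorem stmt15 (u v : ℕ) (hv : 1 ≤ v) (huv : v ≤ u) :
    Nat.card (Quot (fun x y : Set.Icc 1 (2 * u + 2 * v) =>
      (1 ≤ x.1 ∧ x.1 ≤ 2 * u ∧ y.1 = 2 * u + 1 - x.1) ∨
      (2 * u + 1 ≤ x.1 ∧ x.1 ≤ 2 * u + 2 * v ∧ y.1 = 4 * u + 2 * v + 1 - x.1) ∨
      (1 ≤ x.1 ∧ x.1 ≤ 2 * u + 2 * v ∧ y.1 = 2 * u + 2 * v + 1 - x.1))) =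
    Nat.card (Quot (fun x y : Set.Icc 1 (2 * u) =>
      (1 ≤ x.1 ∧ x.1 ≤ 2 * min v (u - v) ∧ y.1 = 2 * min v (u - v) + 1 - x.1) ∨
      (2 * min v (u - v) + 1 ≤ x.1 ∧ x.1 ≤ 2 * u ∧
        y.1 = 2 * u + 2 * min v (u - v) + 1 - x.1) ∨
      (1 ≤ x.1 ∧ x.1 ≤ 2 * u ∧ y.1 = 2 * u + 1 - x.1))) := by
  show Nat.card (Quot (Stmt15.R u v)) = Nat.card (Quot (Stmt15.S u (min v (u - v))))
  rcases le_total v (u - v) with h | h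
  · rw [min_eq_left h]
    exact Nat.card_congr (Stmt15.fold_equiv u v huv)
  · rw [min_eq_right h]
    exact Nat.card_congr
      ((Stmt15.fold_equiv u v huv).trans (Stmt15.S_equiv u v huv))
end
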